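/- arXiv:1907.13078 — 16 statements merged into one kernel-verified Lean document; each statement's English description precedes it below -/
import Mathlib

section
/- Greedy marking by sorting realizes minimal Dörfler marking: if π is a permutation of {1,…,N} with x_{π(1)} ≥ x_{π(2)} ≥ … ≥ x_{π(N)}, v = θ·∑_{j=1}^N x_j, and n is the minimal index with v ≤ ∑_{i=1}^n x_{π(i)}, then M = {π(1),…,π(n)} satisfies the Dörfler criterion and #M = N_min. -/
/-!
Sorting is an exchange argument: for `x` decreasing along `π`, any `k` indices carry at most the
mass of the first `k` sorted ones, because each index of a competing set beyond position `k` can be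
traded for a missing position `≤ k` without decreasing the sum. So a set meeting the Dörfler
criterion with fewer than `n` elements would make a shorter sorted prefix meet it, contradicting
the minimality of `n`.
-/

open Finset

lemma Finset.sum_le_sum_Icc_card_of_antitoneOn {M : Type*} [AddCommMonoid M] [PartialOrder M]
    [IsOrderedAddMonoid M] {N : ℕ} {f : ℕ → M} (hf : AntitoneOn f (Icc 1 N)) {s : Finset ℕ}
    (hs : s ⊆ Icc 1 N) : ∑ i ∈ s, f i ≤ ∑ i ∈ Icc 1 #s, f i := by
  set r := Icc 1 #s
  have hcard_le : #s ≤ N := by simpa using card_le_card hs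
  calc ∑ i ∈ s, f i
      ≤ ∑ i ∈ s ∩ r, f i + #(s \ r) • f #s := by
        rw [← sum_inter_add_sum_sdiff s r]
        gcongr
        refine sum_le_card_nsmul _ _ _ fun i hi ↦ ?_
        have hiN := hs (mem_sdiff.1 hi).1
        have hs_pos : 0 < #s := card_pos.2 ⟨i, (mem_sdiff.1 hi).1⟩
        simp only [r, mem_sdiff, mem_Icc] at hi hiN
        exact hf (mem_Icc.2 ⟨hs_pos, hcard_le⟩) (mem_Icc.2 hiN) (by omega)
    _ = ∑ i ∈ r ∩ s, f i + #(r \ s) • f #s := by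
        rw [inter_comm, card_sdiff_comm (by simp [r])]
    _ ≤ ∑ i ∈ r, f i := by
        rw [← sum_inter_add_sum_sdiff r s]
        gcongr
        refine card_nsmul_le_sum _ _ _ fun i hi ↦ ?_
        simp only [r, mem_sdiff, mem_Icc] at hi
        exact hf (mem_Icc.2 ⟨hi.1.1, by omega⟩) (mem_Icc.2 ⟨by omega, hcard_le⟩) hi.1.2

lemma Finset.sum_le_sum_Icc_card_of_antitoneOn_comp_perm {M : Type*} [AddCommMonoid M]
    [PartialOrder M] [IsOrderedAddMonoid M] {N : ℕ} {x : ℕ → M} {π : Equiv.Perm ℕ}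
    (hπ : ∀ j ∈ Icc 1 N, π j ∈ Icc 1 N) (hsort : AntitoneOn (x ∘ π) (Icc 1 N)) {s : Finset ℕ}
    (hs : s ⊆ Icc 1 N) : ∑ j ∈ s, x j ≤ ∑ i ∈ Icc 1 #s, x (π i) := by
  set t := s.map π.symm.toEmbedding
  have ht : t ⊆ Icc 1 N := by
    intro i hi
    obtain ⟨j, hj, rfl⟩ := mem_map.1 hi
    exact Equiv.Perm.perm_symm_on_of_perm_on_finset hπ (hs hj)
  calc ∑ j ∈ s, x j
      = ∑ i ∈ t, x (π i) := by simp [t]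
    _ ≤ ∑ i ∈ Icc 1 #t, x (π i) := sum_le_sum_Icc_card_of_antitoneOn hsort ht
    _ = ∑ i ∈ Icc 1 #s, x (π i) := by rw [card_map]

theorem stmt_2_general (N : ℕ) (θ : ℝ) (x : ℕ → ℝ)
    (π : Equiv.Perm ℕ) (hπ : ∀ j ∈ Finset.Icc 1 N, π j ∈ Finset.Icc 1 N)
    (hsort : ∀ i ∈ Finset.Icc 1 N, ∀ j ∈ Finset.Icc 1 N, i ≤ j → x (π j) ≤ x (π i))
    (n : ℕ)
    (hn : θ * ∑ j ∈ Finset.Icc 1 N, x j ≤ ∑ i ∈ Finset.Icc 1 n, x (π i))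
    (hnmin : ∀ m, m < n →
      ¬(θ * ∑ j ∈ Finset.Icc 1 N, x j ≤ ∑ i ∈ Finset.Icc 1 m, x (π i))) :
    (θ * ∑ j ∈ Finset.Icc 1 N, x j ≤ ∑ j ∈ (Finset.Icc 1 n).image π, x j) ∧
    ((Finset.Icc 1 n).image ⇑π).card = n ∧
    (∀ M' ⊆ Finset.Icc 1 N,
      θ * ∑ j ∈ Finset.Icc 1 N, x j ≤ ∑ j ∈ M', x j →
      ((Finset.Icc 1 n).image ⇑π).card ≤ M'.card) := by
  have hcard : #((Icc 1 n).image π) = n := by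
    rw [card_image_of_injective _ π.injective, Nat.card_Icc, Nat.add_sub_cancel]
  refine ⟨by rwa [sum_image π.injective.injOn], hcard, fun M' hM' hdorfler ↦ ?_⟩
  rw [hcard]
  by_contra! hlt
  exact hnmin _ hlt (hdorfler.trans (sum_le_sum_Icc_card_of_antitoneOn_comp_perm hπ hsort hM'))

/-- Greedy marking by sorting realizes minimal Dörfler marking: if π sorts x in
descending order on {1,…,N}, v = θ·∑ x_j, and n is minimal with v ≤ ∑_{i≤n} x_{π(i)},
then M = {π(1),…,π(n)} satisfies the Dörfler criterion and #M = N_min. -/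
theorem stmt_2 (N : ℕ) (θ : ℝ) (hθ0 : 0 < θ) (hθ1 : θ < 1) (x : ℕ → ℝ)
    (hx : ∀ j ∈ Finset.Icc 1 N, 0 ≤ x j)
    (hx0 : ∃ j ∈ Finset.Icc 1 N, x j ≠ 0)
    (π : Equiv.Perm ℕ) (hπ : ∀ j ∈ Finset.Icc 1 N, π j ∈ Finset.Icc 1 N)
    (hsort : ∀ i ∈ Finset.Icc 1 N, ∀ j ∈ Finset.Icc 1 N, i ≤ j → x (π j) ≤ x (π i))
    (n : ℕ)
    (hn : θ * ∑ j ∈ Finset.Icc 1 N, x j ≤ ∑ i ∈ Finset.Icc 1 n, x (π i))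
    (hnmin : ∀ m, m < n →
      ¬(θ * ∑ j ∈ Finset.Icc 1 N, x j ≤ ∑ i ∈ Finset.Icc 1 m, x (π i))) :
    (θ * ∑ j ∈ Finset.Icc 1 N, x j ≤ ∑ j ∈ (Finset.Icc 1 n).image π, x j) ∧
    ((Finset.Icc 1 n).image ⇑π).card = n ∧
    (∀ M' ⊆ Finset.Icc 1 N,
      θ * ∑ j ∈ Finset.Icc 1 N, x j ≤ ∑ j ∈ M', x j →
      ((Finset.Icc 1 n).image ⇑π).card ≤ M'.card) :=
  stmt_2_general N θ x π hπ hsort n hn hnmin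
end

section
/- Any set M satisfying the Dörfler criterion and consisting of indices of the largest entries (i.e., x_j ≥ x_k for all j ∈ M, k ∉ M) such that removing any single element of M violates the criterion, has minimal cardinality N_min. -/
/-! If a set `M'` reaching the threshold had fewer elements than `M`, pick `k ∈ M \ M'`. The
entries of `M' \ M` are no larger than those of `M`, and there are at most as many of them as entries in
`(M \ M').erase k`, so `∑_{M'} x ≤ ∑_{M.erase k} x`, which stays below the threshold by the
minimality of `M`. -/

namespace Finset

variable {ι α : Type*} [AddCommMonoid α] [LinearOrder α] [IsOrderedAddMonoid α]

theorem sum_le_sum_of_card_le_of_forall_le {s t : Finset ι} {f : ι → α}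
    (hcard : #s ≤ #t) (hle : ∀ i ∈ s, ∀ j ∈ t, f i ≤ f j) (hnonneg : ∀ j ∈ t, 0 ≤ f j) :
    ∑ i ∈ s, f i ≤ ∑ j ∈ t, f j := by
  rcases t.eq_empty_or_nonempty with rfl | ht
  · simp [card_eq_zero.mp (Nat.le_zero.mp hcard)]
  obtain ⟨j₀, hj₀, hj₀min⟩ := t.exists_min_image f ht
  calc ∑ i ∈ s, f i ≤ #s • f j₀ := sum_le_card_nsmul s f _ fun i hi ↦ hle i hi j₀ hj₀
    _ ≤ #t • f j₀ := nsmul_le_nsmul_left (hnonneg j₀ hj₀) hcard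
    _ ≤ ∑ j ∈ t, f j := card_nsmul_le_sum t f _ hj₀min

variable [DecidableEq ι]

theorem exists_sum_le_sum_erase_of_card_lt {U M M' : Finset ι} {x : ι → α}
    (hM'U : M' ⊆ U) (htop : ∀ j ∈ M, ∀ k ∈ U \ M, x k ≤ x j) (hnonneg : ∀ j ∈ M, 0 ≤ x j)
    (hcard : #M' < #M) :
    ∃ k ∈ M, ∑ j ∈ M', x j ≤ ∑ j ∈ M.erase k, x j := by
  obtain ⟨k, hk⟩ : (M \ M').Nonempty :=
    sdiff_nonempty.mpr fun h ↦ (card_le_card h).not_gt hcard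
  obtain ⟨hkM, hkM'⟩ := mem_sdiff.mp hk
  have hinter : M.erase k ∩ M' = M' ∩ M := by
    rw [erase_inter, erase_eq_of_notMem (by simp [hkM']), inter_comm]
  have hcard_sdiff : #(M' \ M) ≤ #(M.erase k \ M') := by
    have h₁ := card_sdiff_add_card_inter M' M
    have h₂ := card_sdiff_add_card_inter (M.erase k) M'
    rw [hinter, card_erase_of_mem hkM] at h₂
    omega
  refine ⟨k, hkM, ?_⟩
  rw [← sum_inter_add_sum_sdiff M' M, ← sum_inter_add_sum_sdiff (M.erase k) M', hinter]
  refine add_le_add le_rfl (sum_le_sum_of_card_le_of_forall_le hcard_sdiff ?_ fun j hj ↦ ?_)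
  · intro i hi j hj
    obtain ⟨hiM', hiM⟩ := mem_sdiff.mp hi
    exact htop j (mem_of_mem_erase (mem_sdiff.mp hj).1) i (mem_sdiff.mpr ⟨hM'U hiM', hiM⟩)
  · exact hnonneg j (mem_of_mem_erase (mem_sdiff.mp hj).1)

end Finset

theorem stmt_4_general (N : ℕ) (θ : ℝ) (x : ℕ → ℝ)
    (hx : ∀ j ∈ Finset.Icc 1 N, 0 ≤ x j)
    (M : Finset ℕ) (hMsub : M ⊆ Finset.Icc 1 N)
    (ha : ∀ j ∈ M, ∀ k ∈ Finset.Icc 1 N \ M, x k ≤ x j)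
    (hb2 : ∀ k ∈ M, ∑ j ∈ M.erase k, x j < θ * ∑ j ∈ Finset.Icc 1 N, x j) :
    ∀ M' ⊆ Finset.Icc 1 N,
      θ * ∑ j ∈ Finset.Icc 1 N, x j ≤ ∑ j ∈ M', x j → M.card ≤ M'.card := by
  intro M' hM'sub hM'
  by_contra! hlt
  obtain ⟨k, hkM, hle⟩ :=
    Finset.exists_sum_le_sum_erase_of_card_lt hM'sub ha (fun j hj ↦ hx j (hMsub hj)) hlt
  linarith [hb2 k hkM]

/-- Any set M satisfying the Dörfler criterion, consisting of indices of the largest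
entries, and such that removing any single element violates the criterion, has minimal
cardinality N_min. -/
theorem stmt_4 (N : ℕ) (θ : ℝ) (hθ0 : 0 < θ) (hθ1 : θ < 1) (x : ℕ → ℝ)
    (hx : ∀ j ∈ Finset.Icc 1 N, 0 ≤ x j)
    (hx0 : ∃ j ∈ Finset.Icc 1 N, x j ≠ 0)
    (M : Finset ℕ) (hMsub : M ⊆ Finset.Icc 1 N)
    (ha : ∀ j ∈ M, ∀ k ∈ Finset.Icc 1 N \ M, x k ≤ x j)
    (hb1 : θ * ∑ j ∈ Finset.Icc 1 N, x j ≤ ∑ j ∈ M, x j)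
    (hb2 : ∀ k ∈ M, ∑ j ∈ M.erase k, x j < θ * ∑ j ∈ Finset.Icc 1 N, x j) :
    ∀ M' ⊆ Finset.Icc 1 N,
      θ * ∑ j ∈ Finset.Icc 1 N, x j ≤ ∑ j ∈ M', x j → M.card ≤ M'.card :=
  stmt_4_general N θ x hx M hMsub ha hb2
end

section
/- Existence of a minimally-saturated greedy set: for 0 < v ≤ ∑_{j=ℓ}^u x_{π(j)}, there exists M ⊆ {ℓ,…,u} such that x_{π(j)} ≥ x_{π(k)} for all j ∈ M, k ∈ {ℓ,…,u}∖M, and ∑_{j∈M} x_{π(j)} ≥ v > ∑_{j∈M∖{k}} x_{π(j)} for all k ∈ M. -/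
/-! Among the subsets of `s` that are greedy (every chosen weight dominates every unchosen one)
and reach `v`, take one of minimal cardinality. Dropping an element of least weight keeps it
greedy, so by minimality the remaining sum falls below `v`; dropping any other element removes
at least as much weight. -/

namespace Finset

variable {α : Type*} [DecidableEq α]

theorem greedy_erase_of_isMin {β : Type*} [Preorder β]
    {s M : Finset α} {f : α → β} {k₀ : α}
    (hgreedy : ∀ j ∈ M, ∀ k ∈ s \ M, f k ≤ f j) (hk₀ : ∀ j ∈ M, f k₀ ≤ f j) :
    ∀ j ∈ M.erase k₀, ∀ k ∈ s \ M.erase k₀, f k ≤ f j := by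
  intro j hj k hk
  have hjM := mem_of_mem_erase hj
  by_cases hkM : k ∈ M
  · obtain rfl : k = k₀ := by
      by_contra hne
      exact (mem_sdiff.mp hk).2 (mem_erase.mpr ⟨hne, hkM⟩)
    exact hk₀ j hjM
  · exact hgreedy j hjM k (mem_sdiff.mpr ⟨(mem_sdiff.mp hk).1, hkM⟩)

variable {β : Type*} [AddCommMonoid β] [LinearOrder β] [IsOrderedCancelAddMonoid β]

theorem sum_erase_le_sum_erase_of_le {M : Finset α} {f : α → β} {k₀ k : α}
    (hk₀ : k₀ ∈ M) (hk : k ∈ M) (hle : f k₀ ≤ f k) :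
    ∑ j ∈ M.erase k, f j ≤ ∑ j ∈ M.erase k₀, f j := by
  refine le_of_add_le_add_right (a := f k) ?_
  calc ∑ j ∈ M.erase k, f j + f k = ∑ j ∈ M.erase k₀, f j + f k₀ := by
        rw [sum_erase_add _ _ hk, sum_erase_add _ _ hk₀]
    _ ≤ ∑ j ∈ M.erase k₀, f j + f k := by gcongr

theorem exists_greedy_minimal_of_le_sum (s : Finset α) (f : α → β) {v : β}
    (hv : v ≤ ∑ j ∈ s, f j) :
    ∃ M ⊆ s, (∀ j ∈ M, ∀ k ∈ s \ M, f k ≤ f j) ∧ v ≤ ∑ j ∈ M, f j ∧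
      ∀ k ∈ M, ∑ j ∈ M.erase k, f j < v := by
  let C := s.powerset.filter
    fun S => (∀ j ∈ S, ∀ k ∈ s \ S, f k ≤ f j) ∧ v ≤ ∑ j ∈ S, f j
  have hsC : s ∈ C := by
    simp only [C, mem_filter, mem_powerset, sdiff_self]
    exact ⟨subset_rfl, fun _ _ _ h => absurd h (notMem_empty _), hv⟩
  obtain ⟨M, hMC, hmin⟩ := C.exists_min_image card ⟨s, hsC⟩
  simp only [C, mem_filter, mem_powerset] at hMC
  obtain ⟨hMs, hgreedy, hsum⟩ := hMC
  refine ⟨M, hMs, hgreedy, hsum, fun k hk => ?_⟩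
  obtain ⟨k₀, hk₀M, hk₀⟩ := M.exists_min_image f ⟨k, hk⟩
  have herase : ∑ j ∈ M.erase k₀, f j < v := by
    by_contra! hge
    have hC : M.erase k₀ ∈ C := by
      simp only [C, mem_filter, mem_powerset]
      exact ⟨(erase_subset k₀ M).trans hMs, greedy_erase_of_isMin hgreedy hk₀, hge⟩
    exact (card_erase_lt_of_mem hk₀M).not_ge (hmin _ hC)
  exact (sum_erase_le_sum_erase_of_le hk₀M hk (hk₀ k hk)).trans_lt herase

end Finset

theorem stmt_5_general (x : ℕ → ℝ)
    (π : Equiv.Perm ℕ) (ℓ u : ℕ)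
    (v : ℝ) (hv : v ≤ ∑ j ∈ Finset.Icc ℓ u, x (π j)) :
    ∃ M ⊆ Finset.Icc ℓ u,
      (∀ j ∈ M, ∀ k ∈ Finset.Icc ℓ u \ M, x (π k) ≤ x (π j)) ∧
      (v ≤ ∑ j ∈ M, x (π j)) ∧
      (∀ k ∈ M, ∑ j ∈ M.erase k, x (π j) < v) :=
  (Finset.Icc ℓ u).exists_greedy_minimal_of_le_sum (fun j => x (π j)) hv

/-- Existence of a minimally-saturated greedy set: for 0 < v ≤ ∑_{j=ℓ}^u x_{π(j)},
there exists M ⊆ {ℓ,…,u} with x_{π(j)} ≥ x_{π(k)} for j ∈ M, k ∈ {ℓ,…,u}∖M and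
∑_{j∈M} x_{π(j)} ≥ v > ∑_{j∈M∖{k}} x_{π(j)} for all k ∈ M, i.e., 𝔐(x,π,ℓ,u,v) ≠ ∅. -/
theorem stmt_5 (N : ℕ) (x : ℕ → ℝ) (hx : ∀ j, 0 ≤ x j)
    (π : Equiv.Perm ℕ) (ℓ u : ℕ) (hl : 1 ≤ ℓ) (hlu : ℓ ≤ u) (huN : u ≤ N)
    (v : ℝ) (hv0 : 0 < v) (hv : v ≤ ∑ j ∈ Finset.Icc ℓ u, x (π j)) :
    ∃ M ⊆ Finset.Icc ℓ u,
      (∀ j ∈ M, ∀ k ∈ Finset.Icc ℓ u \ M, x (π k) ≤ x (π j)) ∧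
      (v ≤ ∑ j ∈ M, x (π j)) ∧
      (∀ k ∈ M, ∑ j ∈ M.erase k, x (π j) < v) :=
  stmt_5_general x π ℓ u v hv
end

section
/- The minimal marked value x* is well-defined: if M₁ and M₂ both belong to 𝔐(x,π,ℓ,u,v), then min_{j∈M₁} x_{π(j)} = min_{j∈M₂} x_{π(j)}. -/
/-! If `min M₁ < min M₂`, the "top" property of `M₁` puts all of `M₂` into `M₁` minus a minimiser
of `M₁`; since `M₂` already reaches `v`, this contradicts the minimality of `M₁`. -/

open Finset

variable {ι α : Type*} [DecidableEq ι] [LinearOrder α]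

lemma mem_of_inf'_lt {f : ι → α} {S M : Finset ι} (hM : M.Nonempty)
    (htop : ∀ j ∈ M, ∀ k ∈ S \ M, f k ≤ f j) {k : ι} (hk : k ∈ S) (hlt : M.inf' hM f < f k) :
    k ∈ M := by
  by_contra hkM
  exact (le_inf' hM f fun j hj => htop j hj k (mem_sdiff.mpr ⟨hk, hkM⟩)).not_gt hlt

variable [AddCommMonoid α]

/-- Membership in the paper's `𝔐` (nonemptiness aside), for the window `S = {ℓ, …, u}` and weights `f = x ∘ π`. -/
structure IsMarkedSet (f : ι → α) (S : Finset ι) (v : α) (M : Finset ι) : Prop where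
  subset : M ⊆ S
  le_of_mem_sdiff : ∀ j ∈ M, ∀ k ∈ S \ M, f k ≤ f j
  le_sum : v ≤ ∑ j ∈ M, f j
  sum_erase_lt : ∀ k ∈ M, ∑ j ∈ M.erase k, f j < v

variable [IsOrderedAddMonoid α]

lemma inf'_le_inf'_of_minimal {f : ι → α} (hf : ∀ j, 0 ≤ f j) {S M₁ M₂ : Finset ι}
    {v : α} (h₁ : M₁.Nonempty) (h₂ : M₂.Nonempty)
    (htop₁ : ∀ j ∈ M₁, ∀ k ∈ S \ M₁, f k ≤ f j) (hmin₁ : ∀ k ∈ M₁, ∑ j ∈ M₁.erase k, f j < v)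
    (hs₂ : M₂ ⊆ S) (hv₂ : v ≤ ∑ j ∈ M₂, f j) :
    M₂.inf' h₂ f ≤ M₁.inf' h₁ f := by
  by_contra! hlt
  obtain ⟨j₁, hj₁, hj₁_min⟩ := M₁.exists_mem_eq_inf' h₁ f
  have hsub : M₂ ⊆ M₁.erase j₁ := by
    intro j hj
    have hgt : f j₁ < f j := hj₁_min ▸ hlt.trans_le (inf'_le f hj)
    exact mem_erase.mpr ⟨fun h => (h ▸ hgt).false,
      mem_of_inf'_lt h₁ htop₁ (hs₂ hj) (hj₁_min ▸ hgt)⟩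
  have hsum : ∑ j ∈ M₂, f j ≤ ∑ j ∈ M₁.erase j₁, f j :=
    sum_le_sum_of_subset_of_nonneg hsub fun i _ _ => hf i
  exact (hv₂.trans hsum).not_gt (hmin₁ j₁ hj₁)

theorem IsMarkedSet.inf'_eq {f : ι → α} (hf : ∀ j, 0 ≤ f j)
    {S M₁ M₂ : Finset ι} {v : α} (hM₁ : IsMarkedSet f S v M₁) (hM₂ : IsMarkedSet f S v M₂)
    (h₁ : M₁.Nonempty) (h₂ : M₂.Nonempty) :
    M₁.inf' h₁ f = M₂.inf' h₂ f :=
  le_antisymm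
    (inf'_le_inf'_of_minimal hf h₂ h₁ hM₂.le_of_mem_sdiff hM₂.sum_erase_lt hM₁.subset hM₁.le_sum)
    (inf'_le_inf'_of_minimal hf h₁ h₂ hM₁.le_of_mem_sdiff hM₁.sum_erase_lt hM₂.subset hM₂.le_sum)

theorem stmt_6_general (x : ℕ → ℝ) (hx : ∀ j, 0 ≤ x j)
    (π : Equiv.Perm ℕ) (ℓ u : ℕ)
    (v : ℝ)
    (M₁ M₂ : Finset ℕ) (h₁ : M₁.Nonempty) (h₂ : M₂.Nonempty)
    (hs₁ : M₁ ⊆ Finset.Icc ℓ u) (hs₂ : M₂ ⊆ Finset.Icc ℓ u)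
    (ha₁ : ∀ j ∈ M₁, ∀ k ∈ Finset.Icc ℓ u \ M₁, x (π k) ≤ x (π j))
    (hb₁ : v ≤ ∑ j ∈ M₁, x (π j))
    (hc₁ : ∀ k ∈ M₁, ∑ j ∈ M₁.erase k, x (π j) < v)
    (ha₂ : ∀ j ∈ M₂, ∀ k ∈ Finset.Icc ℓ u \ M₂, x (π k) ≤ x (π j))
    (hb₂ : v ≤ ∑ j ∈ M₂, x (π j))
    (hc₂ : ∀ k ∈ M₂, ∑ j ∈ M₂.erase k, x (π j) < v) :
    M₁.inf' h₁ (fun j => x (π j)) = M₂.inf' h₂ (fun j => x (π j)) :=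
  IsMarkedSet.inf'_eq (fun j => hx (π j)) ⟨hs₁, ha₁, hb₁, hc₁⟩ ⟨hs₂, ha₂, hb₂, hc₂⟩ h₁ h₂

/-- The minimal marked value x* is well-defined: if M₁ and M₂ both belong to
𝔐(x,π,ℓ,u,v), then min_{j∈M₁} x_{π(j)} = min_{j∈M₂} x_{π(j)}. -/
theorem stmt_6 (N : ℕ) (x : ℕ → ℝ) (hx : ∀ j, 0 ≤ x j)
    (π : Equiv.Perm ℕ) (ℓ u : ℕ) (hl : 1 ≤ ℓ) (hlu : ℓ ≤ u) (huN : u ≤ N)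
    (v : ℝ) (hv0 : 0 < v) (hv : v ≤ ∑ j ∈ Finset.Icc ℓ u, x (π j))
    (M₁ M₂ : Finset ℕ) (h₁ : M₁.Nonempty) (h₂ : M₂.Nonempty)
    (hs₁ : M₁ ⊆ Finset.Icc ℓ u) (hs₂ : M₂ ⊆ Finset.Icc ℓ u)
    (ha₁ : ∀ j ∈ M₁, ∀ k ∈ Finset.Icc ℓ u \ M₁, x (π k) ≤ x (π j))
    (hb₁ : v ≤ ∑ j ∈ M₁, x (π j))
    (hc₁ : ∀ k ∈ M₁, ∑ j ∈ M₁.erase k, x (π j) < v)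
    (ha₂ : ∀ j ∈ M₂, ∀ k ∈ Finset.Icc ℓ u \ M₂, x (π k) ≤ x (π j))
    (hb₂ : v ≤ ∑ j ∈ M₂, x (π j))
    (hc₂ : ∀ k ∈ M₂, ∑ j ∈ M₂.erase k, x (π j) < v) :
    M₁.inf' h₁ (fun j => x (π j)) = M₂.inf' h₂ (fun j => x (π j)) :=
  stmt_6_general x hx π ℓ u v M₁ M₂ h₁ h₂ hs₁ hs₂ ha₁ hb₁ hc₁ ha₂ hb₂ hc₂
end

section
/- If M₁, M₂ ∈ 𝔐(x,π,ℓ,u,v) and min_{j∈M₁} x_{π(j)} < min_{j∈M₂} x_{π(j)}, then M₂ ⊊ M₁, and this leads to a contradiction v > ∑_{j∈M₂} x_{π(j)} ≥ v; hence the minima are equal. -/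
namespace Finset

variable {ι : Type*} [DecidableEq ι]

theorem ssubset_of_inf'_lt_inf' {α : Type*} [LinearOrder α] {f : ι → α} {T M₁ M₂ : Finset ι}
    (h₁ : M₁.Nonempty) (h₂ : M₂.Nonempty) (hM₂ : M₂ ⊆ T)
    (hM₁ : ∀ j ∈ M₁, ∀ k ∈ T \ M₁, f k ≤ f j) (hlt : M₁.inf' h₁ f < M₂.inf' h₂ f) :
    M₂ ⊂ M₁ := by
  obtain ⟨m, hm, hm_eq⟩ := M₁.exists_mem_eq_inf' h₁ f
  have hsub : M₂ ⊆ M₁ := by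
    intro k hk
    by_contra hkM₁
    have hk_le : f k ≤ f m := hM₁ m hm k (mem_sdiff.2 ⟨hM₂ hk, hkM₁⟩)
    have hinf_le : M₂.inf' h₂ f ≤ f k := inf'_le f hk
    rw [hm_eq] at hlt
    exact (hlt.trans_le hinf_le).not_ge hk_le
  refine ssubset_iff_subset_ne.2 ⟨hsub, ?_⟩
  rintro rfl
  exact lt_irrefl _ hlt

theorem sum_lt_of_ssubset_of_forall_sum_erase_lt {β : Type*} [AddCommMonoid β] [PartialOrder β]
    [IsOrderedAddMonoid β] {f : ι → β} {M₁ M₂ : Finset ι} {v : β}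
    (hf : ∀ i ∈ M₁, 0 ≤ f i) (hM : M₂ ⊂ M₁) (hmin : ∀ k ∈ M₁, ∑ j ∈ M₁.erase k, f j < v) :
    ∑ j ∈ M₂, f j < v := by
  obtain ⟨t, ht₁, ht₂⟩ := exists_of_ssubset hM
  have hsub : M₂ ⊆ M₁.erase t := fun k hk =>
    mem_erase.2 ⟨fun hkt => ht₂ (hkt ▸ hk), hM.subset hk⟩
  calc ∑ j ∈ M₂, f j ≤ ∑ j ∈ M₁.erase t, f j :=
        sum_le_sum_of_subset_of_nonneg hsub fun i hi _ => hf i (mem_of_mem_erase hi)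
    _ < v := hmin t ht₁

end Finset

theorem stmt_7_general (x : ℕ → ℝ) (hx : ∀ j, 0 ≤ x j)
    (π : Equiv.Perm ℕ) (ℓ u : ℕ)
    (v : ℝ)
    (M₁ M₂ : Finset ℕ) (h₁ : M₁.Nonempty) (h₂ : M₂.Nonempty)
    (hs₂ : M₂ ⊆ Finset.Icc ℓ u)
    (ha₁ : ∀ j ∈ M₁, ∀ k ∈ Finset.Icc ℓ u \ M₁, x (π k) ≤ x (π j))
    (hc₁ : ∀ k ∈ M₁, ∑ j ∈ M₁.erase k, x (π j) < v)
    (hb₂ : v ≤ ∑ j ∈ M₂, x (π j))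
    (hlt : M₁.inf' h₁ (fun j => x (π j)) < M₂.inf' h₂ (fun j => x (π j))) :
    M₂ ⊂ M₁ ∧ False := by
  have hM : M₂ ⊂ M₁ := Finset.ssubset_of_inf'_lt_inf' h₁ h₂ hs₂ ha₁ hlt
  have hsum_lt : ∑ j ∈ M₂, x (π j) < v :=
    Finset.sum_lt_of_ssubset_of_forall_sum_erase_lt (fun j _ => hx (π j)) hM hc₁
  exact ⟨hM, hsum_lt.not_ge hb₂⟩

/-- If M₁, M₂ ∈ 𝔐(x,π,ℓ,u,v) and min_{j∈M₁} x_{π(j)} < min_{j∈M₂} x_{π(j)}, then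
M₂ ⊊ M₁, and this leads to the contradiction v > ∑_{j∈M₂} x_{π(j)} ≥ v; hence the
assumption is false. -/
theorem stmt_7 (N : ℕ) (x : ℕ → ℝ) (hx : ∀ j, 0 ≤ x j)
    (π : Equiv.Perm ℕ) (ℓ u : ℕ) (hl : 1 ≤ ℓ) (hlu : ℓ ≤ u) (huN : u ≤ N)
    (v : ℝ) (hv0 : 0 < v) (hv : v ≤ ∑ j ∈ Finset.Icc ℓ u, x (π j))
    (M₁ M₂ : Finset ℕ) (h₁ : M₁.Nonempty) (h₂ : M₂.Nonempty)
    (hs₁ : M₁ ⊆ Finset.Icc ℓ u) (hs₂ : M₂ ⊆ Finset.Icc ℓ u)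
    (ha₁ : ∀ j ∈ M₁, ∀ k ∈ Finset.Icc ℓ u \ M₁, x (π k) ≤ x (π j))
    (hb₁ : v ≤ ∑ j ∈ M₁, x (π j))
    (hc₁ : ∀ k ∈ M₁, ∑ j ∈ M₁.erase k, x (π j) < v)
    (ha₂ : ∀ j ∈ M₂, ∀ k ∈ Finset.Icc ℓ u \ M₂, x (π k) ≤ x (π j))
    (hb₂ : v ≤ ∑ j ∈ M₂, x (π j))
    (hc₂ : ∀ k ∈ M₂, ∑ j ∈ M₂.erase k, x (π j) < v)
    (hlt : M₁.inf' h₁ (fun j => x (π j)) < M₂.inf' h₂ (fun j => x (π j))) :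
    M₂ ⊂ M₁ ∧ False :=
  stmt_7_general x hx π ℓ u v M₁ M₂ h₁ h₂ hs₂ ha₁ hc₁ hb₂ hlt
end

section
/- Subproblem decomposition: if the admissibility condition 0 < v = θ·∑_{j=1}^N x_j − ∑_{j=1}^{ℓ−1} x_{π(j)} ≤ ∑_{j=ℓ}^u x_{π(j)} holds together with the partial ordering x_{π(j)} > x_{π(k)} for all 1 ≤ j < ℓ ≤ k ≤ N and all 1 ≤ j ≤ u < k ≤ N, then for every M' ∈ 𝔐(x,π,ℓ,u,v), the set {1,…,ℓ−1} ∪ M' belongs to 𝔐(x,π,1,N,θ·∑_{j=1}^N x_j). -/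
/-!
Minimality of `A ∪ M` at an element `k ∈ A` reduces to minimality of `M` at any of its
elements `k'`: since `k` dominates `k'`, removing `k` from `A ∪ M` loses at least as much as
removing `k'` from `M`, and the latter already drops the sum below the threshold.
-/

namespace Finset

variable {ι : Type*} [DecidableEq ι] (f : ι → ℝ)

/- `M ∈ 𝔐(x, π, a, b, w)` means `M ⊆ {a, …, b}`, `IsHeavyIn (x ∘ π) {a, …, b} M` and
`IsMinimalCover (x ∘ π) w M`. -/
def IsHeavyIn (S M : Finset ι) : Prop :=
  ∀ j ∈ M, ∀ k ∈ S \ M, f k ≤ f j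

def IsMinimalCover (t : ℝ) (M : Finset ι) : Prop :=
  t ≤ ∑ j ∈ M, f j ∧ ∀ k ∈ M, ∑ j ∈ M.erase k, f j < t

variable {f}

theorem IsHeavyIn.union {S T A M : Finset ι} (hA : IsHeavyIn f S A)
    (hAT : IsHeavyIn f S (A ∪ T)) (hM : IsHeavyIn f T M) (hMT : M ⊆ T) :
    IsHeavyIn f S (A ∪ M) := by
  intro j hj k hk
  obtain ⟨hkS, hkAM⟩ := mem_sdiff.mp hk
  simp only [mem_union, not_or] at hj hkAM
  obtain ⟨hkA, hkM⟩ := hkAM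
  rcases hj with hjA | hjM
  · exact hA j hjA k (mem_sdiff.mpr ⟨hkS, hkA⟩)
  · by_cases hkT : k ∈ T
    · exact hM j hjM k (mem_sdiff.mpr ⟨hkT, hkM⟩)
    · exact hAT j (mem_union_right A (hMT hjM)) k
        (mem_sdiff.mpr ⟨hkS, by simp [hkA, hkT]⟩)

theorem IsMinimalCover.union {A M : Finset ι} {v : ℝ} (hM : IsMinimalCover f v M)
    (hMne : M.Nonempty) (hAM : Disjoint A M) (hdom : ∀ j ∈ A, ∀ k ∈ M, f k ≤ f j) :
    IsMinimalCover f (∑ j ∈ A, f j + v) (A ∪ M) := by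
  obtain ⟨hcover, hmin⟩ := hM
  refine ⟨by rw [sum_union hAM]; linarith, fun k hk => ?_⟩
  rcases mem_union.mp hk with hkA | hkM
  · obtain ⟨k', hk'⟩ := hMne
    have hA := sum_erase_add A f hkA
    have hM := sum_erase_add M f hk'
    have hk'_lt := hmin k' hk'
    have hk'_le := hdom k hkA k' hk'
    rw [erase_union_distrib, erase_eq_of_notMem (disjoint_left.mp hAM hkA),
      sum_union (hAM.mono_left (erase_subset k A))]
    linarith
  · have hkA : k ∉ A := disjoint_right.mp hAM hkM
    rw [erase_union_distrib, erase_eq_of_notMem hkA, sum_union (hAM.mono_right (erase_subset k M))]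
    linarith [hmin k hkM]

end Finset

theorem stmt_8_general (N : ℕ) (θ : ℝ) (x : ℕ → ℝ)
    (π : Equiv.Perm ℕ) (ℓ u : ℕ) (hl : 1 ≤ ℓ) (hlu : ℓ ≤ u) (huN : u ≤ N)
    (v : ℝ)
    (hord1 : ∀ j k : ℕ, 1 ≤ j → j < ℓ → ℓ ≤ k → k ≤ N → x (π k) < x (π j))
    (hord2 : ∀ j k : ℕ, 1 ≤ j → j ≤ u → u < k → k ≤ N → x (π k) < x (π j))
    (hv0 : 0 < v)
    (hveq : v = θ * ∑ j ∈ Finset.Icc 1 N, x j - ∑ j ∈ Finset.Icc 1 (ℓ - 1), x (π j)) :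
    ∀ M' ⊆ Finset.Icc ℓ u,
      (∀ j ∈ M', ∀ k ∈ Finset.Icc ℓ u \ M', x (π k) ≤ x (π j)) →
      (v ≤ ∑ j ∈ M', x (π j)) →
      (∀ k ∈ M', ∑ j ∈ M'.erase k, x (π j) < v) →
      (Finset.Icc 1 (ℓ - 1) ∪ M') ⊆ Finset.Icc 1 N ∧
      (∀ j ∈ Finset.Icc 1 (ℓ - 1) ∪ M',
        ∀ k ∈ Finset.Icc 1 N \ (Finset.Icc 1 (ℓ - 1) ∪ M'), x (π k) ≤ x (π j)) ∧
      (θ * ∑ j ∈ Finset.Icc 1 N, x j ≤ ∑ j ∈ Finset.Icc 1 (ℓ - 1) ∪ M', x (π j)) ∧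
      (∀ k ∈ Finset.Icc 1 (ℓ - 1) ∪ M',
        ∑ j ∈ (Finset.Icc 1 (ℓ - 1) ∪ M').erase k, x (π j)
          < θ * ∑ j ∈ Finset.Icc 1 N, x j) := by
  intro M' hM'T hheavy hcover hmin
  set f : ℕ → ℝ := fun j => x (π j)
  set A := Finset.Icc 1 (ℓ - 1)
  set S := Finset.Icc 1 N
  have hTS : Finset.Icc ℓ u ⊆ S := Finset.Icc_subset_Icc hl huN
  have hAS : A ⊆ S := Finset.Icc_subset_Icc le_rfl (by omega)
  have hAM : Disjoint A M' := Finset.disjoint_left.mpr fun j hjA hjM => by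
    have hjT := hM'T hjM
    simp only [A, Finset.mem_Icc] at hjA hjT
    omega
  have hA : Finset.IsHeavyIn f S A := fun j hj k hk => by
    simp only [A, S, Finset.mem_sdiff, Finset.mem_Icc, not_and, not_le] at hj hk
    exact (hord1 j k hj.1 (by omega) (by omega) hk.1.2).le
  have hAT : Finset.IsHeavyIn f S (A ∪ Finset.Icc ℓ u) := fun j hj k hk => by
    simp only [A, S, Finset.mem_sdiff, Finset.mem_union, Finset.mem_Icc, not_or, not_and,
      not_le] at hj hk
    exact (hord2 j k (by omega) (by omega) (by omega) hk.1.2).le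
  have hM'ne : M'.Nonempty := Finset.nonempty_of_sum_ne_zero (by linarith : ∑ j ∈ M', f j ≠ 0)
  have hAM' : Finset.IsMinimalCover f (∑ j ∈ A, f j + v) (A ∪ M') :=
    Finset.IsMinimalCover.union ⟨hcover, hmin⟩ hM'ne hAM fun j hj k hk =>
      hA j hj k (Finset.mem_sdiff.mpr ⟨hTS (hM'T hk), Finset.disjoint_right.mp hAM hk⟩)
  rw [show ∑ j ∈ A, f j + v = θ * ∑ j ∈ S, x j by linarith] at hAM'
  exact ⟨Finset.union_subset hAS (hM'T.trans hTS), hA.union hAT hheavy hM'T, hAM'⟩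

/-- Subproblem decomposition: under admissibility and partial ordering, for every
M' ∈ 𝔐(x,π,ℓ,u,v), the set {1,…,ℓ−1} ∪ M' belongs to 𝔐(x,π,1,N,θ·∑ x_j). -/
theorem stmt_8 (N : ℕ) (θ : ℝ) (hθ0 : 0 < θ) (hθ1 : θ < 1) (x : ℕ → ℝ)
    (hx : ∀ j, 0 ≤ x j) (hx0 : ∃ j ∈ Finset.Icc 1 N, x j ≠ 0)
    (π : Equiv.Perm ℕ) (ℓ u : ℕ) (hl : 1 ≤ ℓ) (hlu : ℓ ≤ u) (huN : u ≤ N)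
    (v : ℝ)
    (hord1 : ∀ j k : ℕ, 1 ≤ j → j < ℓ → ℓ ≤ k → k ≤ N → x (π k) < x (π j))
    (hord2 : ∀ j k : ℕ, 1 ≤ j → j ≤ u → u < k → k ≤ N → x (π k) < x (π j))
    (hv0 : 0 < v)
    (hveq : v = θ * ∑ j ∈ Finset.Icc 1 N, x j - ∑ j ∈ Finset.Icc 1 (ℓ - 1), x (π j))
    (hvle : v ≤ ∑ j ∈ Finset.Icc ℓ u, x (π j)) :
    ∀ M' ⊆ Finset.Icc ℓ u,
      (∀ j ∈ M', ∀ k ∈ Finset.Icc ℓ u \ M', x (π k) ≤ x (π j)) →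
      (v ≤ ∑ j ∈ M', x (π j)) →
      (∀ k ∈ M', ∑ j ∈ M'.erase k, x (π j) < v) →
      (Finset.Icc 1 (ℓ - 1) ∪ M') ⊆ Finset.Icc 1 N ∧
      (∀ j ∈ Finset.Icc 1 (ℓ - 1) ∪ M',
        ∀ k ∈ Finset.Icc 1 N \ (Finset.Icc 1 (ℓ - 1) ∪ M'), x (π k) ≤ x (π j)) ∧
      (θ * ∑ j ∈ Finset.Icc 1 N, x j ≤ ∑ j ∈ Finset.Icc 1 (ℓ - 1) ∪ M', x (π j)) ∧
      (∀ k ∈ Finset.Icc 1 (ℓ - 1) ∪ M',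
        ∑ j ∈ (Finset.Icc 1 (ℓ - 1) ∪ M').erase k, x (π j)
          < θ * ∑ j ∈ Finset.Icc 1 N, x j) :=
  stmt_8_general N θ x π ℓ u hl hlu huN v hord1 hord2 hv0 hveq
end

section
/- If M ∈ 𝔐(x,π,1,N,θ·∑_{j=1}^N x_j), then M' := π(M) = {π(j) : j ∈ M} satisfies the Dörfler criterion θ·∑_{j=1}^N x_j ≤ ∑_{j∈M'} x_j with minimal cardinality #M' = N_min. -/
/-!
A Dörfler set `M'` with `#M' < #M` can be exchanged, element by element, for a subset of `M` of the
same size: elements of `M'` inside `M` are kept, and each one outside `M` is traded for an unused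
element of `M`, which by the ordering condition (a) is at least as large. The sum therefore only
grows, so some `M.erase m` would already reach the bulk threshold, contradicting minimality (b).
-/

open Finset

namespace Finset

variable {ι β : Type*} [AddCommMonoid β] [LinearOrder β] [IsOrderedAddMonoid β] {f : ι → β}

lemma sum_le_sum_of_card_eq_of_forall_le {s t : Finset ι} (hcard : #s = #t)
    (hle : ∀ i ∈ s, ∀ j ∈ t, f i ≤ f j) : ∑ i ∈ s, f i ≤ ∑ j ∈ t, f j := by
  rcases t.eq_empty_or_nonempty with rfl | ht
  · rw [card_eq_zero.1 hcard]
  obtain ⟨j₀, hj₀, hj₀_min⟩ := t.exists_min_image f ht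
  calc ∑ i ∈ s, f i ≤ #s • f j₀ := sum_le_card_nsmul s f _ fun i hi ↦ hle i hi j₀ hj₀
    _ = #t • f j₀ := by rw [hcard]
    _ ≤ ∑ j ∈ t, f j := card_nsmul_le_sum t f _ hj₀_min

variable [DecidableEq ι]

lemma exists_subset_card_eq_sum_le {s t : Finset ι} (hcard : #t ≤ #s)
    (hle : ∀ i ∈ s, ∀ j ∈ t \ s, f j ≤ f i) :
    ∃ u ⊆ s, #u = #t ∧ ∑ j ∈ t, f j ≤ ∑ i ∈ u, f i := by
  have hcard' : #(t \ s) ≤ #(s \ (t ∩ s)) := by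
    rw [card_sdiff_of_subset inter_subset_right]
    have := card_inter_add_card_sdiff t s
    omega
  obtain ⟨r, hr, hr_card⟩ := exists_subset_card_eq hcard'
  have hdisj : Disjoint (t ∩ s) r :=
    disjoint_left.2 fun i hi hir ↦ (mem_sdiff.1 (hr hir)).2 hi
  refine ⟨t ∩ s ∪ r, union_subset inter_subset_right (hr.trans sdiff_subset), ?_, ?_⟩
  · rw [card_union_of_disjoint hdisj, hr_card, card_inter_add_card_sdiff]
  · rw [sum_union hdisj, ← sum_inter_add_sum_sdiff t s]
    exact add_le_add_right (sum_le_sum_of_card_eq_of_forall_le hr_card.symm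
      fun j hj i hi ↦ hle i (sdiff_subset (hr hi)) j hj) _

lemma card_le_of_le_sum {s t : Finset ι} {v : β} (hs : ∀ i ∈ s, 0 ≤ f i)
    (hle : ∀ i ∈ s, ∀ j ∈ t \ s, f j ≤ f i) (hmin : ∀ m ∈ s, ∑ i ∈ s.erase m, f i < v)
    (ht : v ≤ ∑ j ∈ t, f j) : #s ≤ #t := by
  by_contra! hlt
  obtain ⟨u, hus, hu_card, ht_le⟩ := exists_subset_card_eq_sum_le hlt.le hle
  obtain ⟨m, hm, hmu⟩ := exists_of_ssubset (ssubset_of_subset_of_ne hus (by rintro rfl; omega))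
  have hu_erase : u ⊆ s.erase m := fun i hi ↦ mem_erase.2 ⟨by rintro rfl; exact hmu hi, hus hi⟩
  refine lt_irrefl v ?_
  calc v ≤ ∑ j ∈ t, f j := ht
    _ ≤ ∑ i ∈ u, f i := ht_le
    _ ≤ ∑ i ∈ s.erase m, f i :=
      sum_le_sum_of_subset_of_nonneg hu_erase fun i hi _ ↦ hs i (mem_of_mem_erase hi)
    _ < v := hmin m hm

end Finset

lemma Equiv.Perm.symm_mem_of_mapsTo {α : Type*} [DecidableEq α] {π : Equiv.Perm α}
    {s : Finset α} (hπ : ∀ j ∈ s, π j ∈ s) {j : α} (hj : j ∈ s) : π.symm j ∈ s := by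
  have himage : s.image π = s :=
    eq_of_subset_of_card_le (fun _ hy ↦ by obtain ⟨a, ha, rfl⟩ := mem_image.1 hy; exact hπ a ha)
      (card_image_of_injective _ π.injective).ge
  obtain ⟨a, ha, rfl⟩ := mem_image.1 (himage ▸ hj)
  simpa using ha

theorem stmt_9_general (N : ℕ) (θ : ℝ) (x : ℕ → ℝ)
    (hx : ∀ j ∈ Finset.Icc 1 N, 0 ≤ x j)
    (π : Equiv.Perm ℕ) (hπ : ∀ j ∈ Finset.Icc 1 N, π j ∈ Finset.Icc 1 N)
    (M : Finset ℕ) (hMsub : M ⊆ Finset.Icc 1 N)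
    (ha : ∀ j ∈ M, ∀ k ∈ Finset.Icc 1 N \ M, x (π k) ≤ x (π j))
    (hb : θ * ∑ j ∈ Finset.Icc 1 N, x j ≤ ∑ j ∈ M, x (π j))
    (hc : ∀ k ∈ M, ∑ j ∈ M.erase k, x (π j) < θ * ∑ j ∈ Finset.Icc 1 N, x j) :
    (θ * ∑ j ∈ Finset.Icc 1 N, x j ≤ ∑ j ∈ M.image ⇑π, x j) ∧
    (M.image ⇑π).card = M.card ∧
    (∀ M' ⊆ Finset.Icc 1 N,
      θ * ∑ j ∈ Finset.Icc 1 N, x j ≤ ∑ j ∈ M', x j →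
      (M.image ⇑π).card ≤ M'.card) := by
  have hcard : (M.image π).card = M.card := card_image_of_injective _ π.injective
  have hsum (s : Finset ℕ) : ∑ j ∈ s.image π, x j = ∑ j ∈ s, x (π j) :=
    sum_image fun _ _ _ _ h ↦ π.injective h
  refine ⟨hsum M ▸ hb, hcard, fun M' hM' hM'_sum ↦ hcard ▸ ?_⟩
  -- pull `M'` back along `π`, where the ordering condition `ha` lives
  have hpull : (M'.image π.symm).image π = M' := by simp [image_image]
  have hK : M'.image π.symm ⊆ Icc 1 N := fun k hk ↦ by
    obtain ⟨a, haM', rfl⟩ := mem_image.1 hk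
    exact π.symm_mem_of_mapsTo hπ (hM' haM')
  calc M.card ≤ (M'.image π.symm).card :=
        card_le_of_le_sum (fun j hj ↦ hx _ (hπ j (hMsub hj)))
          (fun j hj k hk ↦ ha j hj k (sdiff_subset_sdiff hK le_rfl hk)) hc
          (by rwa [← hsum, hpull])
    _ = M'.card := card_image_of_injective _ π.symm.injective

/-- If M ∈ 𝔐(x,π,1,N,θ·∑ x_j), then M' := π(M) satisfies the Dörfler criterion
θ·∑ x_j ≤ ∑_{j∈M'} x_j with minimal cardinality #M' = N_min. -/
theorem stmt_9 (N : ℕ) (θ : ℝ) (hθ0 : 0 < θ) (hθ1 : θ < 1) (x : ℕ → ℝ)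
    (hx : ∀ j ∈ Finset.Icc 1 N, 0 ≤ x j)
    (hx0 : ∃ j ∈ Finset.Icc 1 N, x j ≠ 0)
    (π : Equiv.Perm ℕ) (hπ : ∀ j ∈ Finset.Icc 1 N, π j ∈ Finset.Icc 1 N)
    (M : Finset ℕ) (hMsub : M ⊆ Finset.Icc 1 N)
    (ha : ∀ j ∈ M, ∀ k ∈ Finset.Icc 1 N \ M, x (π k) ≤ x (π j))
    (hb : θ * ∑ j ∈ Finset.Icc 1 N, x j ≤ ∑ j ∈ M, x (π j))
    (hc : ∀ k ∈ M, ∑ j ∈ M.erase k, x (π j) < θ * ∑ j ∈ Finset.Icc 1 N, x j) :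
    (θ * ∑ j ∈ Finset.Icc 1 N, x j ≤ ∑ j ∈ M.image ⇑π, x j) ∧
    (M.image ⇑π).card = M.card ∧
    (∀ M' ⊆ Finset.Icc 1 N,
      θ * ∑ j ∈ Finset.Icc 1 N, x j ≤ ∑ j ∈ M', x j →
      (M.image ⇑π).card ≤ M'.card) :=
  stmt_9_general N θ x hx π hπ M hMsub ha hb hc
end

section
/- Partition-based termination criterion: suppose the array x∘π restricted to {ℓ,…,u} is partitioned with indices g < s such that x_{π(j)} > p* for ℓ ≤ j ≤ g, x_{π(j)} = p* for g < j < s, and x_{π(j)} < p* for s ≤ j ≤ u. If σ_g := ∑_{j=ℓ}^g x_{π(j)} < v ≤ σ_g + (s−g−1)·p*, then n := g + ⌈(v−σ_g)/p*⌉ satisfies g < n < s and {ℓ,…,n} ∈ 𝔐(x,π,ℓ,u,v). -/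
/-!
Write `σ` for the sum over the block `{ℓ, …, g}` of entries above the pivot and
`c = ⌈(v - σ)/p*⌉`. The entries `g + 1, …, g + c` all equal `p*`, so the prefix `{ℓ, …, g + c}`
has sum `σ + c p*`, which is at least `v` by the choice of `c`, while removing any entry (each is
at least `p*`) leaves at most `σ + (c - 1) p* < v`. The hypothesis `v ≤ σ + (s - g - 1) p*` is
exactly what makes `c ≤ s - g - 1`, i.e. keeps the prefix inside the block of pivot entries;
everything outside the prefix is then at most `p*`, hence dominated by everything inside it.
-/

open Finset

theorem sum_Icc_add_of_eq_const {M : Type*} [AddCommMonoid M] {f : ℕ → M} {p : M}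
    {ℓ g c : ℕ} (hℓg : ℓ ≤ g + 1) (hf : ∀ j, g < j → j ≤ g + c → f j = p) :
    ∑ j ∈ Icc ℓ (g + c), f j = ∑ j ∈ Icc ℓ g, f j + c • p := by
  rw [← Ico_add_one_right_eq_Icc, ← Ico_add_one_right_eq_Icc,
    ← sum_Ico_consecutive f hℓg (by omega : g + 1 ≤ g + c + 1)]
  congr 1
  rw [sum_congr rfl fun j hj => hf j (by simp at hj; omega) (by simp at hj; omega),
    sum_const, Nat.card_Ico, Nat.add_sub_add_right, Nat.add_sub_cancel_left]

theorem sum_erase_lt_of_forall_le {ι M : Type*} [DecidableEq ι] [AddCommGroup M] [PartialOrder M]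
    [IsOrderedAddMonoid M] {s : Finset ι} {f : ι → M} {p v : M} (hp : ∀ k ∈ s, p ≤ f k)
    (hs : ∑ j ∈ s, f j < v + p) {k : ι} (hk : k ∈ s) : ∑ j ∈ s.erase k, f j < v := by
  rw [sum_erase_eq_sub hk]
  exact (sub_le_sub_left (hp k hk) _).trans_lt (sub_lt_iff_lt_add.2 hs)

section Partition

variable {f : ℕ → ℝ} {p : ℝ} {ℓ g s u : ℕ}

theorem pivot_le_of_lt_of_partition (hgt : ∀ j, ℓ ≤ j → j ≤ g → p < f j)
    (heq : ∀ j, g < j → j < s → f j = p) {j : ℕ} (hℓj : ℓ ≤ j) (hjs : j < s) : p ≤ f j := by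
  rcases le_or_gt j g with hjg | hgj
  · exact (hgt j hℓj hjg).le
  · exact (heq j hgj hjs).ge

theorem le_pivot_of_gt_of_partition (heq : ∀ j, g < j → j < s → f j = p)
    (hlt : ∀ j, s ≤ j → j ≤ u → f j < p) {k : ℕ} (hgk : g < k) (hku : k ≤ u) : f k ≤ p := by
  rcases lt_or_ge k s with hks | hsk
  · exact (heq k hgk hks).le
  · exact (hlt k hsk hku).le

end Partition

theorem stmt_10_general (x : ℕ → ℝ)
    (π : Equiv.Perm ℕ) (ℓ u g s : ℕ)
    (v : ℝ)
    (pstar : ℝ) (hp0 : 0 < pstar)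
    (hg1 : ℓ ≤ g + 1) (hgs : g < s) (hs1 : s ≤ u + 1)
    (hpart1 : ∀ j, ℓ ≤ j → j ≤ g → pstar < x (π j))
    (hpart2 : ∀ j, g < j → j < s → x (π j) = pstar)
    (hpart3 : ∀ j, s ≤ j → j ≤ u → x (π j) < pstar)
    (hσ1 : ∑ j ∈ Finset.Icc ℓ g, x (π j) < v)
    (hσ2 : v ≤ ∑ j ∈ Finset.Icc ℓ g, x (π j) + ((s - g - 1 : ℕ) : ℝ) * pstar) :
    ∀ n : ℕ, n = g + (⌈(v - ∑ j ∈ Finset.Icc ℓ g, x (π j)) / pstar⌉).toNat →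
      g < n ∧ n < s ∧
      Finset.Icc ℓ n ⊆ Finset.Icc ℓ u ∧
      (∀ j ∈ Finset.Icc ℓ n, ∀ k ∈ Finset.Icc ℓ u \ Finset.Icc ℓ n,
        x (π k) ≤ x (π j)) ∧
      (v ≤ ∑ j ∈ Finset.Icc ℓ n, x (π j)) ∧
      (∀ k ∈ Finset.Icc ℓ n, ∑ j ∈ (Finset.Icc ℓ n).erase k, x (π j) < v) := by
  set σ := ∑ j ∈ Icc ℓ g, x (π j)
  set c := ⌈(v - σ) / pstar⌉₊ with hc
  rintro n rfl
  rw [Int.ceil_toNat, ← hc]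
  have hquot : 0 < (v - σ) / pstar := div_pos (sub_pos.2 hσ1) hp0
  have hc_pos : 0 < c := Nat.ceil_pos.2 hquot
  have hc_le : c ≤ s - g - 1 := Nat.ceil_le.2 ((div_le_iff₀ hp0).2 (by linarith))
  have hc_ge : v - σ ≤ c * pstar := (div_le_iff₀ hp0).1 (Nat.le_ceil _)
  have hc_lt : ((c : ℝ) - 1) * pstar < v - σ :=
    (lt_div_iff₀ hp0).1 (sub_lt_iff_lt_add.2 (Nat.ceil_lt_add_one hquot.le))
  have hsum : ∑ j ∈ Icc ℓ (g + c), x (π j) = σ + c * pstar := by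
    rw [sum_Icc_add_of_eq_const hg1 fun j hgj hjn => hpart2 j hgj (by omega), nsmul_eq_mul]
  have hpivot_le : ∀ j ∈ Icc ℓ (g + c), pstar ≤ x (π j) := fun j hj => by
    rw [mem_Icc] at hj
    exact pivot_le_of_lt_of_partition hpart1 hpart2 hj.1 (by omega)
  refine ⟨by omega, by omega, Icc_subset_Icc_right (by omega), ?_, by linarith, ?_⟩
  · intro j hj k hk
    simp only [mem_sdiff, mem_Icc, not_and, not_le] at hk
    exact (le_pivot_of_gt_of_partition hpart2 hpart3 (by omega) hk.1.2).trans (hpivot_le j hj)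
  · exact fun k => sum_erase_lt_of_forall_le hpivot_le (by linarith)

/-- Partition-based termination criterion: if x∘π on {ℓ,…,u} is partitioned at a pivot
value p* with indices g < s and σ_g := ∑_{j=ℓ}^g x_{π(j)} satisfies
σ_g < v ≤ σ_g + (s−g−1)·p*, then n := g + ⌈(v−σ_g)/p*⌉ satisfies g < n < s and
{ℓ,…,n} ∈ 𝔐(x,π,ℓ,u,v). -/
theorem stmt_10 (N : ℕ) (x : ℕ → ℝ) (hx : ∀ j, 0 ≤ x j)
    (π : Equiv.Perm ℕ) (ℓ u g s : ℕ) (hl : 1 ≤ ℓ) (hlu : ℓ ≤ u) (huN : u ≤ N)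
    (v : ℝ) (hv0 : 0 < v) (hv : v ≤ ∑ j ∈ Finset.Icc ℓ u, x (π j))
    (pstar : ℝ) (hp0 : 0 < pstar)
    (hg1 : ℓ ≤ g + 1) (hgs : g < s) (hs1 : s ≤ u + 1)
    (hpart1 : ∀ j, ℓ ≤ j → j ≤ g → pstar < x (π j))
    (hpart2 : ∀ j, g < j → j < s → x (π j) = pstar)
    (hpart3 : ∀ j, s ≤ j → j ≤ u → x (π j) < pstar)
    (hσ1 : ∑ j ∈ Finset.Icc ℓ g, x (π j) < v)
    (hσ2 : v ≤ ∑ j ∈ Finset.Icc ℓ g, x (π j) + ((s - g - 1 : ℕ) : ℝ) * pstar) :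
    ∀ n : ℕ, n = g + (⌈(v - ∑ j ∈ Finset.Icc ℓ g, x (π j)) / pstar⌉).toNat →
      g < n ∧ n < s ∧
      Finset.Icc ℓ n ⊆ Finset.Icc ℓ u ∧
      (∀ j ∈ Finset.Icc ℓ n, ∀ k ∈ Finset.Icc ℓ u \ Finset.Icc ℓ n,
        x (π k) ≤ x (π j)) ∧
      (v ≤ ∑ j ∈ Finset.Icc ℓ n, x (π j)) ∧
      (∀ k ∈ Finset.Icc ℓ n, ∑ j ∈ (Finset.Icc ℓ n).erase k, x (π j) < v) :=
  stmt_10_general x π ℓ u g s v pstar hp0 hg1 hgs hs1 hpart1 hpart2 hpart3 hσ1 hσ2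
end

section
/- Pivot termination equivalence: in the partitioned setting (x_{π(j)} > p* for ℓ ≤ j ≤ g, = p* for g < j < s, < p* for s ≤ j ≤ u with g < s, p* > 0), the inequality σ_g < v ≤ σ_g + (s−g−1)·p* holds (with σ_g = ∑_{j=ℓ}^g x_{π(j)}) if and only if p* = x*(x,π,ℓ,u,v), the common minimal value min_{j∈M} x_{π(j)} over M ∈ 𝔐(x,π,ℓ,u,v). -/
/-!
If `σ_g < v ≤ σ_g + (s - g - 1) p*`, the least `m` with `v ≤ σ_g + m p*` satisfies
`1 ≤ m ≤ s - g - 1`, and the segment `{ℓ, …, g + m}` (every entry above `p*` and `m` entries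
equal to `p*`) is a member of `𝔐` with minimum `p*`. Conversely, a member of `𝔐` with minimum `p*`
contains every entry above `p*` and none below it, so its sum is at most `σ_g + (s - g - 1) p*`,
while dropping an entry equal to `p*` leaves a sum of at least `σ_g` that is below `v`.
-/

open Finset

/-- `M` belongs to the family `𝔐` of the paper, for the values `f` on the index set `I`. -/
structure IsTopCover {ι : Type*} [DecidableEq ι] (f : ι → ℝ) (I : Finset ι) (v : ℝ)
    (M : Finset ι) : Prop where
  subset : M ⊆ I
  le_of_mem_of_mem_sdiff : ∀ j ∈ M, ∀ k ∈ I \ M, f k ≤ f j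
  le_sum : v ≤ ∑ j ∈ M, f j
  sum_erase_lt : ∀ k ∈ M, ∑ j ∈ M.erase k, f j < v

namespace IsTopCover

variable {ι : Type*} [DecidableEq ι] {f : ι → ℝ} {I M : Finset ι} {v : ℝ}

theorem nonempty (hM : IsTopCover f I v M) (hv : 0 < v) : M.Nonempty := by
  rw [nonempty_iff_ne_empty]
  rintro rfl
  have := hM.le_sum
  simp only [sum_empty] at this
  linarith

theorem mem_of_lt (hM : IsTopCover f I v M) {j k : ι} (hk : k ∈ M) (hj : j ∈ I)
    (hlt : f k < f j) : j ∈ M := by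
  by_contra hjM
  exact (hM.le_of_mem_of_mem_sdiff k hk j (mem_sdiff.2 ⟨hj, hjM⟩)).not_gt hlt

end IsTopCover

theorem isTopCover_of_threshold {ι : Type*} [DecidableEq ι] {f : ι → ℝ} {I M : Finset ι}
    {v p : ℝ} (hsub : M ⊆ I) (hge : ∀ j ∈ M, p ≤ f j) (hle : ∀ k ∈ I \ M, f k ≤ p)
    (hv : v ≤ ∑ j ∈ M, f j) (hv' : ∑ j ∈ M, f j - p < v) : IsTopCover f I v M where
  subset := hsub
  le_of_mem_of_mem_sdiff j hj k hk := (hle k hk).trans (hge j hj)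
  le_sum := hv
  sum_erase_lt k hk := by
    rw [sum_erase_eq_sub hk]
    linarith [hge k hk]

theorem exists_nat_sub_one_mul_lt_le {a v p : ℝ} {n : ℕ} (hp : 0 < p) (ha : a < v)
    (hn : v ≤ a + n * p) : ∃ m : ℕ, 0 < m ∧ m ≤ n ∧ a + (m - 1) * p < v ∧ v ≤ a + m * p := by
  have hq : 0 < (v - a) / p := div_pos (sub_pos.2 ha) hp
  refine ⟨⌈(v - a) / p⌉₊, Nat.ceil_pos.2 hq, Nat.ceil_le.2 ?_, ?_, ?_⟩
  · rw [div_le_iff₀ hp]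
    linarith
  · have := sub_lt_iff_lt_add.2 (Nat.ceil_lt_add_one hq.le)
    rw [lt_div_iff₀ hp] at this
    linarith
  · have := Nat.le_ceil ((v - a) / p)
    rw [div_le_iff₀ hp] at this
    linarith

theorem sum_Icc_eq_sum_Icc_add_sum_Ioc (f : ℕ → ℝ) {ℓ g n : ℕ} (hℓ : ℓ ≤ g + 1) (hg : g ≤ n) :
    ∑ j ∈ Icc ℓ n, f j = ∑ j ∈ Icc ℓ g, f j + ∑ j ∈ Ioc g n, f j := by
  rw [← sum_union]
  · congr 1
    ext j
    simp only [mem_Icc, mem_union, mem_Ioc]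
    omega
  · simp only [disjoint_left, mem_Icc, mem_Ioc]
    omega

section Partition

variable {f : ℕ → ℝ} {ℓ u g s : ℕ} {p v : ℝ}

theorem exists_isTopCover_inf'_eq (hp : 0 < p) (hg1 : ℓ ≤ g + 1) (hgs : g < s)
    (hs1 : s ≤ u + 1) (hpart1 : ∀ j, ℓ ≤ j → j ≤ g → p < f j)
    (hpart2 : ∀ j, g < j → j < s → f j = p) (hpart3 : ∀ j, s ≤ j → j ≤ u → f j < p)
    (hlt : ∑ j ∈ Icc ℓ g, f j < v)
    (hle : v ≤ ∑ j ∈ Icc ℓ g, f j + ((s - g - 1 : ℕ) : ℝ) * p) :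
    ∃ M, IsTopCover f (Icc ℓ u) v M ∧ ∃ hne : M.Nonempty, M.inf' hne f = p := by
  obtain ⟨m, hm0, hms, hlt', hle'⟩ := exists_nat_sub_one_mul_lt_le hp hlt hle
  have hsum : ∑ j ∈ Icc ℓ (g + m), f j = ∑ j ∈ Icc ℓ g, f j + m * p := by
    rw [sum_Icc_eq_sum_Icc_add_sum_Ioc f hg1 (by omega),
      sum_congr rfl fun j hj => hpart2 j (mem_Ioc.1 hj).1 (by have := (mem_Ioc.1 hj).2; omega),
      sum_const, Nat.card_Ioc, nsmul_eq_mul, Nat.add_sub_cancel_left]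
  have hge : ∀ j ∈ Icc ℓ (g + m), p ≤ f j := by
    intro j hj
    rcases le_or_gt j g with hjg | hjg
    · exact (hpart1 j (mem_Icc.1 hj).1 hjg).le
    · exact (hpart2 j hjg (by have := (mem_Icc.1 hj).2; omega)).ge
  have hle_out : ∀ k ∈ Icc ℓ u \ Icc ℓ (g + m), f k ≤ p := by
    intro k hk
    simp only [mem_sdiff, mem_Icc] at hk
    rcases lt_or_ge k s with hks | hks
    · exact (hpart2 k (by omega) hks).le
    · exact (hpart3 k hks hk.1.2).le
  have hmem : g + 1 ∈ Icc ℓ (g + m) := mem_Icc.2 ⟨hg1, by omega⟩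
  refine ⟨Icc ℓ (g + m), isTopCover_of_threshold (Icc_subset_Icc le_rfl (by omega)) hge
    hle_out (hsum ▸ hle') (by rw [hsum]; linarith), ⟨_, hmem⟩, ?_⟩
  exact le_antisymm (inf'_le_of_le f hmem (hpart2 _ (by omega) (by omega)).le) (le_inf' _ _ hge)

theorem IsTopCover.bounds_of_inf'_eq {M : Finset ℕ} (hM : IsTopCover f (Icc ℓ u) v M)
    (hne : M.Nonempty) (hinf : M.inf' hne f = p) (hp : 0 < p) (hgs : g < s) (hs1 : s ≤ u + 1)
    (hpart1 : ∀ j, ℓ ≤ j → j ≤ g → p < f j) (hpart2 : ∀ j, g < j → j < s → f j = p)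
    (hpart3 : ∀ j, s ≤ j → j ≤ u → f j < p) :
    ∑ j ∈ Icc ℓ g, f j < v ∧ v ≤ ∑ j ∈ Icc ℓ g, f j + ((s - g - 1 : ℕ) : ℝ) * p := by
  have hge : ∀ j ∈ M, p ≤ f j := fun j hj => hinf ▸ inf'_le f hj
  obtain ⟨j₀, hj₀M, hj₀⟩ := exists_mem_eq_inf' hne f
  rw [hinf] at hj₀
  have hupper : Icc ℓ g ⊆ M.erase j₀ := by
    intro j hj
    obtain ⟨hℓj, hjg⟩ := mem_Icc.1 hj
    have hfj := hpart1 j hℓj hjg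
    refine mem_erase.2 ⟨fun h => by subst h; linarith, ?_⟩
    exact hM.mem_of_lt hj₀M (mem_Icc.2 ⟨hℓj, by omega⟩) (hj₀ ▸ hfj)
  have hmiddle : M \ Icc ℓ g ⊆ Ioo g s := by
    intro j hj
    obtain ⟨hjM, hjg⟩ := mem_sdiff.1 hj
    obtain ⟨hℓj, hju⟩ := mem_Icc.1 (hM.subset hjM)
    have hjs : j < s := by
      by_contra! hjs
      linarith [hge j hjM, hpart3 j hjs hju]
    exact mem_Ioo.2 ⟨by simp only [mem_Icc, not_and, not_le] at hjg; exact hjg hℓj, hjs⟩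
  have hpos : ∀ j ∈ M, 0 ≤ f j := fun j hj => hp.le.trans (hge j hj)
  constructor
  · calc ∑ j ∈ Icc ℓ g, f j
        ≤ ∑ j ∈ M.erase j₀, f j :=
          sum_le_sum_of_subset_of_nonneg hupper fun j hj _ => hpos j (mem_of_mem_erase hj)
      _ < v := hM.sum_erase_lt j₀ hj₀M
  · calc v ≤ ∑ j ∈ M, f j := hM.le_sum
      _ = ∑ j ∈ Icc ℓ g, f j + ∑ j ∈ M \ Icc ℓ g, f j :=
          (sum_sdiff (hupper.trans (erase_subset _ _))).symm.trans (add_comm _ _)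
      _ ≤ ∑ j ∈ Icc ℓ g, f j + ∑ j ∈ Ioo g s, f j :=
          add_le_add_right (sum_le_sum_of_subset_of_nonneg hmiddle fun j hj _ =>
            (hpart2 j (mem_Ioo.1 hj).1 (mem_Ioo.1 hj).2).symm ▸ hp.le) _
      _ = ∑ j ∈ Icc ℓ g, f j + ((s - g - 1 : ℕ) : ℝ) * p := by
          rw [sum_congr rfl fun j hj => hpart2 j (mem_Ioo.1 hj).1 (mem_Ioo.1 hj).2, sum_const,
            Nat.card_Ioo, nsmul_eq_mul]

end Partition

theorem stmt_11_general (x : ℕ → ℝ)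
    (π : Equiv.Perm ℕ) (ℓ u g s : ℕ)
    (v : ℝ) (hv0 : 0 < v)
    (pstar : ℝ) (hp0 : 0 < pstar)
    (hg1 : ℓ ≤ g + 1) (hgs : g < s) (hs1 : s ≤ u + 1)
    (hpart1 : ∀ j, ℓ ≤ j → j ≤ g → pstar < x (π j))
    (hpart2 : ∀ j, g < j → j < s → x (π j) = pstar)
    (hpart3 : ∀ j, s ≤ j → j ≤ u → x (π j) < pstar)
    (xstar : ℝ)
    (hMne : ∃ M ⊆ Finset.Icc ℓ u,
      (∀ j ∈ M, ∀ k ∈ Finset.Icc ℓ u \ M, x (π k) ≤ x (π j)) ∧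
      (v ≤ ∑ j ∈ M, x (π j)) ∧
      (∀ k ∈ M, ∑ j ∈ M.erase k, x (π j) < v))
    (hxstar : ∀ M, M ⊆ Finset.Icc ℓ u →
      (∀ j ∈ M, ∀ k ∈ Finset.Icc ℓ u \ M, x (π k) ≤ x (π j)) →
      (v ≤ ∑ j ∈ M, x (π j)) →
      (∀ k ∈ M, ∑ j ∈ M.erase k, x (π j) < v) →
      ∀ hne : M.Nonempty, M.inf' hne (fun j => x (π j)) = xstar) :
    (∑ j ∈ Finset.Icc ℓ g, x (π j) < v ∧
      v ≤ ∑ j ∈ Finset.Icc ℓ g, x (π j) + ((s - g - 1 : ℕ) : ℝ) * pstar)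
    ↔ pstar = xstar := by
  have hxstar' : ∀ M, IsTopCover (fun j => x (π j)) (Icc ℓ u) v M →
      ∀ hne : M.Nonempty, M.inf' hne (fun j => x (π j)) = xstar :=
    fun M hM => hxstar M hM.1 hM.2 hM.3 hM.4
  constructor
  · rintro ⟨hlt, hle⟩
    obtain ⟨M, hM, hne, hinf⟩ :=
      exists_isTopCover_inf'_eq hp0 hg1 hgs hs1 hpart1 hpart2 hpart3 hlt hle
    rw [← hinf, hxstar' M hM hne]
  · rintro rfl
    obtain ⟨M, hsub, hmono, hle, hlt⟩ := hMne
    have hM : IsTopCover (fun j => x (π j)) (Icc ℓ u) v M := ⟨hsub, hmono, hle, hlt⟩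
    have hne := hM.nonempty hv0
    exact hM.bounds_of_inf'_eq hne (hxstar' M hM hne) hp0 hgs hs1 hpart1 hpart2 hpart3

/-- Pivot termination equivalence: in the partitioned setting, σ_g < v ≤ σ_g + (s−g−1)·p*
holds if and only if p* equals x*(x,π,ℓ,u,v), the common minimal value
min_{j∈M} x_{π(j)} over M ∈ 𝔐(x,π,ℓ,u,v). -/
theorem stmt_11 (N : ℕ) (x : ℕ → ℝ) (hx : ∀ j, 0 ≤ x j)
    (π : Equiv.Perm ℕ) (ℓ u g s : ℕ) (hl : 1 ≤ ℓ) (hlu : ℓ ≤ u) (huN : u ≤ N)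
    (v : ℝ) (hv0 : 0 < v) (hv : v ≤ ∑ j ∈ Finset.Icc ℓ u, x (π j))
    (pstar : ℝ) (hp0 : 0 < pstar)
    (hg1 : ℓ ≤ g + 1) (hgs : g < s) (hs1 : s ≤ u + 1)
    (hpart1 : ∀ j, ℓ ≤ j → j ≤ g → pstar < x (π j))
    (hpart2 : ∀ j, g < j → j < s → x (π j) = pstar)
    (hpart3 : ∀ j, s ≤ j → j ≤ u → x (π j) < pstar)
    (xstar : ℝ)
    (hMne : ∃ M ⊆ Finset.Icc ℓ u,
      (∀ j ∈ M, ∀ k ∈ Finset.Icc ℓ u \ M, x (π k) ≤ x (π j)) ∧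
      (v ≤ ∑ j ∈ M, x (π j)) ∧
      (∀ k ∈ M, ∑ j ∈ M.erase k, x (π j) < v))
    (hxstar : ∀ M, M ⊆ Finset.Icc ℓ u →
      (∀ j ∈ M, ∀ k ∈ Finset.Icc ℓ u \ M, x (π k) ≤ x (π j)) →
      (v ≤ ∑ j ∈ M, x (π j)) →
      (∀ k ∈ M, ∑ j ∈ M.erase k, x (π j) < v) →
      ∀ hne : M.Nonempty, M.inf' hne (fun j => x (π j)) = xstar) :
    (∑ j ∈ Finset.Icc ℓ g, x (π j) < v ∧
      v ≤ ∑ j ∈ Finset.Icc ℓ g, x (π j) + ((s - g - 1 : ℕ) : ℝ) * pstar)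
    ↔ pstar = xstar :=
  stmt_11_general x π ℓ u g s v hv0 pstar hp0 hg1 hgs hs1 hpart1 hpart2 hpart3 xstar hMne hxstar
end

section
/- For every M ∈ 𝔐(x,π,ℓ,u,v) in the partitioned setting (entries > p* on {ℓ,…,g}, = p* on {g+1,…,s−1}, < p* on {s,…,u}, with p* = x*(x,π,ℓ,u,v)), it holds that {ℓ,…,g} ⊊ M ⊆ {ℓ,…,s−1}. -/
/-!
Every index of `{ℓ,…,u}` outside `M` is dominated by the minimum `p*` of `x ∘ π` on `M`, so indices
with value `> p*` lie in `M`; indices with value `< p*` cannot lie in `M` since `p*` is its minimum;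
and a minimizer in `M` has value exactly `p*`, so it is not among the indices `ℓ,…,g`.
-/

theorem Finset.mem_of_inf'_lt_of_forall_le {ι α : Type*} [DecidableEq ι] [LinearOrder α] {f : ι → α}
    {S M : Finset ι} (hne : M.Nonempty) (htop : ∀ j ∈ M, ∀ k ∈ S \ M, f k ≤ f j)
    {j : ι} (hjS : j ∈ S) (hj : M.inf' hne f < f j) : j ∈ M := by
  by_contra hjM
  obtain ⟨k, hkM, hk⟩ := M.exists_mem_eq_inf' hne f
  exact (htop k hkM j (mem_sdiff.mpr ⟨hjS, hjM⟩)).not_gt (hk ▸ hj)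

theorem stmt_12_general (x : ℕ → ℝ)
    (π : Equiv.Perm ℕ) (ℓ u g s : ℕ)
    (pstar : ℝ)
    (hgs : g < s) (hs1 : s ≤ u + 1)
    (hpart1 : ∀ j, ℓ ≤ j → j ≤ g → pstar < x (π j))
    (hpart3 : ∀ j, s ≤ j → j ≤ u → x (π j) < pstar)
    (M : Finset ℕ) (hMsub : M ⊆ Finset.Icc ℓ u) (hne : M.Nonempty)
    (ha : ∀ j ∈ M, ∀ k ∈ Finset.Icc ℓ u \ M, x (π k) ≤ x (π j))
    (hmin : M.inf' hne (fun j => x (π j)) = pstar) :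
    Finset.Icc ℓ g ⊂ M ∧ M ⊆ Finset.Icc ℓ (s - 1) := by
  have hM_le : M ⊆ Finset.Icc ℓ (s - 1) := by
    intro j hjM
    obtain ⟨hℓj, hju⟩ := Finset.mem_Icc.mp (hMsub hjM)
    refine Finset.mem_Icc.mpr ⟨hℓj, Nat.le_sub_one_of_lt (Nat.lt_of_not_le fun hsj => ?_)⟩
    have hmin_le : pstar ≤ x (π j) := hmin ▸ Finset.inf'_le _ hjM
    exact (hpart3 j hsj hju).not_ge hmin_le
  have hIcc_le : Finset.Icc ℓ g ⊆ M := by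
    intro j hj
    obtain ⟨hℓj, hjg⟩ := Finset.mem_Icc.mp hj
    exact Finset.mem_of_inf'_lt_of_forall_le hne ha
      (Finset.mem_Icc.mpr ⟨hℓj, by omega⟩) (hmin ▸ hpart1 j hℓj hjg)
  obtain ⟨k, hkM, hk⟩ := M.exists_mem_eq_inf' hne (fun j => x (π j))
  refine ⟨Finset.ssubset_iff_subset_ne.mpr ⟨hIcc_le, fun hIcc_eq => ?_⟩, hM_le⟩
  obtain ⟨hℓk, hkg⟩ := Finset.mem_Icc.mp (hIcc_eq ▸ hkM)
  exact (hpart1 k hℓk hkg).ne (hmin ▸ hk)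

/-- For every M ∈ 𝔐(x,π,ℓ,u,v) in the partitioned setting with p* = x*(x,π,ℓ,u,v),
it holds that {ℓ,…,g} ⊊ M ⊆ {ℓ,…,s−1}. -/
theorem stmt_12 (N : ℕ) (x : ℕ → ℝ) (hx : ∀ j, 0 ≤ x j)
    (π : Equiv.Perm ℕ) (ℓ u g s : ℕ) (hl : 1 ≤ ℓ) (hlu : ℓ ≤ u) (huN : u ≤ N)
    (v : ℝ) (hv0 : 0 < v) (hv : v ≤ ∑ j ∈ Finset.Icc ℓ u, x (π j))
    (pstar : ℝ) (hp0 : 0 < pstar)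
    (hg1 : ℓ ≤ g + 1) (hgs : g < s) (hs1 : s ≤ u + 1)
    (hpart1 : ∀ j, ℓ ≤ j → j ≤ g → pstar < x (π j))
    (hpart2 : ∀ j, g < j → j < s → x (π j) = pstar)
    (hpart3 : ∀ j, s ≤ j → j ≤ u → x (π j) < pstar)
    (M : Finset ℕ) (hMsub : M ⊆ Finset.Icc ℓ u) (hne : M.Nonempty)
    (ha : ∀ j ∈ M, ∀ k ∈ Finset.Icc ℓ u \ M, x (π k) ≤ x (π j))
    (hb : v ≤ ∑ j ∈ M, x (π j))
    (hc : ∀ k ∈ M, ∑ j ∈ M.erase k, x (π j) < v)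
    (hmin : M.inf' hne (fun j => x (π j)) = pstar) :
    Finset.Icc ℓ g ⊂ M ∧ M ⊆ Finset.Icc ℓ (s - 1) :=
  stmt_12_general x π ℓ u g s pstar hgs hs1 hpart1 hpart3 M hMsub hne ha hmin
end

section
/- Binning with geometric thresholds yields quasi-minimal Dörfler marking: for 0 < ν < 1, the set M produced by ordering elements by bins B_k = {j : ν^{k+1} < x_j/M_max ≤ ν^k} (for k = 0,…,K, with K minimal such that ν^{K+1}·M_max ≤ ((1−θ)/θ)·v/N, and B_{K+1} the remainder) and greedily taking elements bin-by-bin until ∑_{i≤n} x_{π(i)} ≥ v := θ·∑_j x_j, satisfies the Dörfler criterion with #M ≤ ⌈ν^{-1}·N_min⌉. -/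
/-!
The elements outside the bins `0, …, K` are each at most `ν ^ (K + 1) * Mmax ≤ (1 - θ) S / N`,
so the bins `0, …, K` alone already satisfy the Dörfler criterion and the greedy selection stops
inside some bin `k ≤ K`. The first `n - 1` selected elements then all exceed
`ν ^ (k + 1) * Mmax`, while every other element is at most `ν ^ k * Mmax`. A minimal Dörfler set
has a larger sum than these `n - 1` elements, and trading elements of size `≤ ν ^ k * Mmax`
against elements of size `> ν ^ (k + 1) * Mmax` shows that it needs more than `ν (n - 1)` of them.
-/

open Finset

theorem le_pow_mul_of_forall_notMem_Ioc {ν c a : ℝ} {m : ℕ} (ha : a ≤ c)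
    (h : ∀ k < m, a ∉ Set.Ioc (ν ^ (k + 1) * c) (ν ^ k * c)) : a ≤ ν ^ m * c := by
  induction m with
  | zero => simpa using ha
  | succ m ih =>
    have hm := ih fun k hk => h k (by omega)
    by_contra! hlt
    exact h m (by omega) ⟨hlt, hm⟩

namespace Finset

variable {ι : Type*} {x : ι → ℝ}

theorem mul_sum_le_sum_filter_of_small_compl (s : Finset ι) (p : ι → Prop) [DecidablePred p]
    {θ c : ℝ} (hc : 0 ≤ c) (hsmall : ∀ j ∈ s, ¬p j → x j ≤ c)
    (hbudget : #s * c ≤ (1 - θ) * ∑ j ∈ s, x j) :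
    θ * ∑ j ∈ s, x j ≤ ∑ j ∈ s with p j, x j := by
  have hcompl : ∑ j ∈ s with ¬p j, x j ≤ #s * c :=
    calc ∑ j ∈ s with ¬p j, x j ≤ #{j ∈ s | ¬p j} • c :=
          sum_le_card_nsmul _ _ _ fun j hj => hsmall j (mem_filter.1 hj).1 (mem_filter.1 hj).2
      _ ≤ #s * c := by
          rw [nsmul_eq_mul]
          exact mul_le_mul_of_nonneg_right (by exact_mod_cast card_filter_le _ _) hc
  linarith [sum_filter_add_sum_filter_not s p x]

theorem mul_card_lt_card_of_sum_lt_sum [DecidableEq ι] {ν t : ℝ} {P M : Finset ι}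
    (hν : ν ≤ 1) (ht : 0 < t) (hP : ∀ j ∈ P, ν * t ≤ x j) (hM : ∀ j ∈ M, j ∉ P → x j ≤ t)
    (hsum : ∑ j ∈ P, x j < ∑ j ∈ M, x j) : ν * #P < #M := by
  have hsdiff : ∑ j ∈ P \ M, x j < ∑ j ∈ M \ P, x j := by
    have hPM := sum_inter_add_sum_sdiff P M x
    have hMP := sum_inter_add_sum_sdiff M P x
    rw [inter_comm] at hMP
    linarith
  have hlow : #(P \ M) • (ν * t) ≤ ∑ j ∈ P \ M, x j :=
    card_nsmul_le_sum _ _ _ fun j hj => hP j (mem_sdiff.1 hj).1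
  have hhigh : ∑ j ∈ M \ P, x j ≤ #(M \ P) • t :=
    sum_le_card_nsmul _ _ _ fun j hj => hM j (mem_sdiff.1 hj).1 (mem_sdiff.1 hj).2
  rw [nsmul_eq_mul] at hlow hhigh
  have hsdiff_card : ν * #(P \ M) < #(M \ P) :=
    lt_of_mul_lt_mul_right (by linarith) ht.le
  have hinter : ν * #(P ∩ M) ≤ #(P ∩ M) := mul_le_of_le_one_left (Nat.cast_nonneg _) hν
  have hP_card : (#(P \ M) : ℝ) + #(P ∩ M) = #P := by exact_mod_cast card_sdiff_add_card_inter P M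
  have hM_card : (#(M \ P) : ℝ) + #(P ∩ M) = #M := by
    rw [inter_comm]; exact_mod_cast card_sdiff_add_card_inter M P
  calc ν * #P = ν * #(P \ M) + ν * #(P ∩ M) := by rw [← hP_card, mul_add]
    _ < #M := by linarith

end Finset

section GreedyBinning

variable {N K n : ℕ} {ν Mmax : ℝ} {x : ℕ → ℝ} {b : ℕ → ℕ} {π : Equiv.Perm ℕ}

theorem le_pow_mul_of_le_bin (hMb : ∀ j ∈ Icc 1 N, x j ≤ Mmax)
    (hbin : ∀ j ∈ Icc 1 N, ∀ k : ℕ, k ≤ K →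
      (b j = k ↔ (ν ^ (k + 1) * Mmax < x j ∧ x j ≤ ν ^ k * Mmax)))
    {j k : ℕ} (hj : j ∈ Icc 1 N) (hkK : k ≤ K + 1) (hkb : k ≤ b j) : x j ≤ ν ^ k * Mmax :=
  le_pow_mul_of_forall_notMem_Ioc (hMb j hj) fun k' hk' hmem => by
    have := (hbin j hj k' (by omega)).2 hmem
    omega

theorem mul_sum_le_sum_filter_bin_le {θ : ℝ} (hθ : 0 < θ) (hN : 0 < N) (hν : 0 ≤ ν)
    (hMmax : 0 ≤ Mmax) (hMb : ∀ j ∈ Icc 1 N, x j ≤ Mmax)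
    (hbin : ∀ j ∈ Icc 1 N, ∀ k : ℕ, k ≤ K →
      (b j = k ↔ (ν ^ (k + 1) * Mmax < x j ∧ x j ≤ ν ^ k * Mmax)))
    (hK : ν ^ (K + 1) * Mmax ≤ (1 - θ) / θ * ((θ * ∑ j ∈ Icc 1 N, x j) / N)) :
    θ * ∑ j ∈ Icc 1 N, x j ≤ ∑ j ∈ Icc 1 N with b j ≤ K, x j := by
  refine mul_sum_le_sum_filter_of_small_compl _ _ (by positivity)
    (fun j hj hb => le_pow_mul_of_le_bin hMb hbin hj le_rfl (by omega)) ?_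
  rw [Nat.card_Icc, Nat.add_sub_cancel]
  calc (N : ℝ) * (ν ^ (K + 1) * Mmax)
      ≤ N * ((1 - θ) / θ * ((θ * ∑ j ∈ Icc 1 N, x j) / N)) := by gcongr
    _ = (1 - θ) * ∑ j ∈ Icc 1 N, x j := by field_simp

theorem image_Icc_eq (hπ : ∀ j ∈ Icc 1 N, π j ∈ Icc 1 N) : (Icc 1 N).image π = Icc 1 N :=
  eq_of_subset_of_card_le (image_subset_iff.2 hπ) (card_image_of_injective _ π.injective).ge

theorem mem_image_Icc_pred_of_bin_lt (hπ : ∀ j ∈ Icc 1 N, π j ∈ Icc 1 N)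
    (hπord : ∀ i ∈ Icc 1 N, ∀ j ∈ Icc 1 N, b (π i) < b (π j) → i < j)
    (hn : n ∈ Icc 1 N) {j : ℕ} (hj : j ∈ Icc 1 N) (hb : b j < b (π n)) :
    j ∈ (Icc 1 (n - 1)).image π := by
  rw [← image_Icc_eq hπ] at hj
  obtain ⟨i, hi, rfl⟩ := mem_image.1 hj
  have := hπord i hi n hn hb
  exact mem_image_of_mem π (mem_Icc.2 ⟨(mem_Icc.1 hi).1, by omega⟩)

theorem bin_le_of_sum_image_Icc_pred_lt (hx : ∀ j ∈ Icc 1 N, 0 ≤ x j)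
    (hπ : ∀ j ∈ Icc 1 N, π j ∈ Icc 1 N)
    (hπord : ∀ i ∈ Icc 1 N, ∀ j ∈ Icc 1 N, b (π i) < b (π j) → i < j)
    (hn : n ∈ Icc 1 N) {v : ℝ} (hL : v ≤ ∑ j ∈ Icc 1 N with b j ≤ K, x j)
    (hP : ∑ j ∈ (Icc 1 (n - 1)).image π, x j < v) : b (π n) ≤ K := by
  by_contra! hK
  have hsub : {j ∈ Icc 1 N | b j ≤ K} ⊆ (Icc 1 (n - 1)).image π := fun j hj =>
    mem_image_Icc_pred_of_bin_lt hπ hπord hn (mem_filter.1 hj).1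
      (by have := (mem_filter.1 hj).2; omega)
  have hPI : (Icc 1 (n - 1)).image π ⊆ Icc 1 N :=
    (image_subset_image (Icc_subset_Icc_right (by grind))).trans (image_Icc_eq hπ).le
  linarith [sum_le_sum_of_subset_of_nonneg hsub fun j hj _ => hx j (hPI hj)]

theorem mul_card_lt_card_of_sum_image_Icc_pred_lt (hν0 : 0 < ν) (hν1 : ν ≤ 1) (hMmax : 0 < Mmax)
    (hMb : ∀ j ∈ Icc 1 N, x j ≤ Mmax)
    (hbin : ∀ j ∈ Icc 1 N, ∀ k : ℕ, k ≤ K →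
      (b j = k ↔ (ν ^ (k + 1) * Mmax < x j ∧ x j ≤ ν ^ k * Mmax)))
    (hπ : ∀ j ∈ Icc 1 N, π j ∈ Icc 1 N)
    (hπord : ∀ i ∈ Icc 1 N, ∀ j ∈ Icc 1 N, b (π i) < b (π j) → i < j)
    (hn : n ∈ Icc 1 N) (hk : b (π n) ≤ K) {M : Finset ℕ} (hM : M ⊆ Icc 1 N)
    (hsum : ∑ j ∈ (Icc 1 (n - 1)).image π, x j < ∑ j ∈ M, x j) :
    ν * (n - 1 : ℕ) < #M := by
  have h := mul_card_lt_card_of_sum_lt_sum (t := ν ^ b (π n) * Mmax) hν1 (by positivity)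
    ?_ ?_ hsum
  · rwa [card_image_of_injective _ π.injective, Nat.card_Icc, Nat.add_sub_cancel] at h
  · intro j hj
    obtain ⟨i, hi, rfl⟩ := mem_image.1 hj
    have hiI : i ∈ Icc 1 N := mem_Icc.2 ⟨(mem_Icc.1 hi).1, by grind⟩
    have hbi : b (π i) ≤ b (π n) := not_lt.1 fun h => by
      have := hπord n hn i hiI h
      grind
    calc ν * (ν ^ b (π n) * Mmax) = ν ^ (b (π n) + 1) * Mmax := by ring
      _ ≤ ν ^ (b (π i) + 1) * Mmax :=
        mul_le_mul_of_nonneg_right (pow_le_pow_of_le_one hν0.le hν1 (by omega)) hMmax.le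
      _ ≤ x (π i) := ((hbin (π i) (hπ i hiI) _ (hbi.trans hk)).1 rfl).1.le
  · intro j hj hjP
    exact le_pow_mul_of_le_bin hMb hbin (hM hj) (by omega)
      (not_lt.1 fun h => hjP (mem_image_Icc_pred_of_bin_lt hπ hπord hn (hM hj) h))

end GreedyBinning

theorem stmt_13_general (N : ℕ) (θ ν : ℝ) (hθ0 : 0 < θ) (hθ1 : θ < 1)
    (hν0 : 0 < ν) (hν1 : ν < 1) (x : ℕ → ℝ)
    (hx : ∀ j ∈ Finset.Icc 1 N, 0 ≤ x j)
    (Mmax : ℝ) (hMb : ∀ j ∈ Finset.Icc 1 N, x j ≤ Mmax)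
    (K : ℕ)
    (hK : ν ^ (K + 1) * Mmax
      ≤ (1 - θ) / θ * ((θ * ∑ j ∈ Finset.Icc 1 N, x j) / N))
    (b : ℕ → ℕ)
    (hbin : ∀ j ∈ Finset.Icc 1 N, ∀ k : ℕ, k ≤ K →
      (b j = k ↔ (ν ^ (k + 1) * Mmax < x j ∧ x j ≤ ν ^ k * Mmax)))
    (π : Equiv.Perm ℕ) (hπ : ∀ j ∈ Finset.Icc 1 N, π j ∈ Finset.Icc 1 N)
    (hπord : ∀ i ∈ Finset.Icc 1 N, ∀ j ∈ Finset.Icc 1 N, b (π i) < b (π j) → i < j)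
    (n : ℕ)
    (hn : θ * ∑ j ∈ Finset.Icc 1 N, x j ≤ ∑ i ∈ Finset.Icc 1 n, x (π i))
    (hnmin : ∀ m, m < n →
      ¬(θ * ∑ j ∈ Finset.Icc 1 N, x j ≤ ∑ i ∈ Finset.Icc 1 m, x (π i))) :
    (θ * ∑ j ∈ Finset.Icc 1 N, x j ≤ ∑ j ∈ (Finset.Icc 1 n).image ⇑π, x j) ∧
    ((((Finset.Icc 1 n).image ⇑π).card : ℤ)
      ≤ ⌈ν⁻¹ * ((sInf {m : ℕ | ∃ M' ⊆ Finset.Icc 1 N,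
          (θ * ∑ j ∈ Finset.Icc 1 N, x j ≤ ∑ j ∈ M', x j) ∧ M'.card = m} : ℕ) : ℝ)⌉) := by
  refine ⟨by rwa [sum_image π.injective.injOn], ?_⟩
  rw [card_image_of_injective _ π.injective, Nat.card_Icc, Nat.add_sub_cancel]
  rcases Nat.eq_zero_or_pos n with rfl | hn1
  · exact Int.ceil_nonneg (by positivity)
  set S := ∑ j ∈ Icc 1 N, x j
  have hv : 0 < θ * S := by simpa using hnmin 0 hn1
  have hS_le : S ≤ N * Mmax := by
    simpa using sum_le_card_nsmul _ _ _ hMb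
  have hNM : 0 < (N : ℝ) * Mmax := by nlinarith
  have hMmax : 0 < Mmax := pos_of_mul_pos_right hNM N.cast_nonneg
  have hN : 0 < N := by exact_mod_cast pos_of_mul_pos_left hNM hMmax.le
  have hnN : n ≤ N := by
    by_contra! hNn
    refine hnmin N hNn ?_
    rw [← sum_image π.injective.injOn, image_Icc_eq hπ]
    nlinarith
  have hnI : n ∈ Icc 1 N := mem_Icc.2 ⟨hn1, hnN⟩
  have hL := mul_sum_le_sum_filter_bin_le hθ0 hN hν0.le hMmax.le hMb hbin hK
  have hP : ∑ j ∈ (Icc 1 (n - 1)).image π, x j < θ * S := by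
    rw [sum_image π.injective.injOn]
    exact not_le.1 (hnmin _ (by omega))
  obtain ⟨M, hMI, hMdorf, hMcard⟩ :=
    Nat.sInf_mem (s := {m : ℕ | ∃ M' ⊆ Icc 1 N, (θ * S ≤ ∑ j ∈ M', x j) ∧ #M' = m})
      ⟨_, _, filter_subset _ _, hL, rfl⟩
  have hcard := mul_card_lt_card_of_sum_image_Icc_pred_lt hν0 hν1.le hMmax hMb hbin hπ hπord hnI
    (bin_le_of_sum_image_Icc_pred_lt hx hπ hπord hnI hL hP) hMI (hP.trans_le hMdorf)
  rw [← hMcard, Int.le_ceil_iff]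
  push_cast
  rw [← Nat.cast_pred hn1]
  exact (lt_inv_mul_iff₀ hν0).2 hcard

/-- Binning with geometric thresholds yields quasi-minimal Dörfler marking: the set M
produced by ordering elements bin-by-bin (bins B_k = {j : ν^{k+1}·M_max < x_j ≤ ν^k·M_max}
for k ≤ K, K minimal with ν^{K+1}·M_max ≤ ((1−θ)/θ)·v/N, and remainder bin B_{K+1}) and
greedily taking elements until the partial sum reaches v := θ·∑ x_j, satisfies the
Dörfler criterion with #M ≤ ⌈ν⁻¹·N_min⌉. -/
theorem stmt_13 (N : ℕ) (hN : 1 ≤ N) (θ ν : ℝ) (hθ0 : 0 < θ) (hθ1 : θ < 1)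
    (hν0 : 0 < ν) (hν1 : ν < 1) (x : ℕ → ℝ)
    (hx : ∀ j ∈ Finset.Icc 1 N, 0 ≤ x j)
    (hx0 : ∃ j ∈ Finset.Icc 1 N, x j ≠ 0)
    (Mmax : ℝ) (hMb : ∀ j ∈ Finset.Icc 1 N, x j ≤ Mmax)
    (hMa : ∃ j ∈ Finset.Icc 1 N, x j = Mmax)
    (K : ℕ)
    (hK : ν ^ (K + 1) * Mmax
      ≤ (1 - θ) / θ * ((θ * ∑ j ∈ Finset.Icc 1 N, x j) / N))
    (hKmin : ∀ K' : ℕ, K' < K →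
      ¬(ν ^ (K' + 1) * Mmax
        ≤ (1 - θ) / θ * ((θ * ∑ j ∈ Finset.Icc 1 N, x j) / N)))
    (b : ℕ → ℕ) (hbK : ∀ j ∈ Finset.Icc 1 N, b j ≤ K + 1)
    (hbin : ∀ j ∈ Finset.Icc 1 N, ∀ k : ℕ, k ≤ K →
      (b j = k ↔ (ν ^ (k + 1) * Mmax < x j ∧ x j ≤ ν ^ k * Mmax)))
    (π : Equiv.Perm ℕ) (hπ : ∀ j ∈ Finset.Icc 1 N, π j ∈ Finset.Icc 1 N)
    (hπord : ∀ i ∈ Finset.Icc 1 N, ∀ j ∈ Finset.Icc 1 N, b (π i) < b (π j) → i < j)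
    (n : ℕ)
    (hn : θ * ∑ j ∈ Finset.Icc 1 N, x j ≤ ∑ i ∈ Finset.Icc 1 n, x (π i))
    (hnmin : ∀ m, m < n →
      ¬(θ * ∑ j ∈ Finset.Icc 1 N, x j ≤ ∑ i ∈ Finset.Icc 1 m, x (π i))) :
    (θ * ∑ j ∈ Finset.Icc 1 N, x j ≤ ∑ j ∈ (Finset.Icc 1 n).image ⇑π, x j) ∧
    ((((Finset.Icc 1 n).image ⇑π).card : ℤ)
      ≤ ⌈ν⁻¹ * ((sInf {m : ℕ | ∃ M' ⊆ Finset.Icc 1 N,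
          (θ * ∑ j ∈ Finset.Icc 1 N, x j ≤ ∑ j ∈ M', x j) ∧ M'.card = m} : ℕ) : ℝ)⌉) :=
  stmt_13_general N θ ν hθ0 hθ1 hν0 hν1 x hx Mmax hMb K hK b hbin π hπ hπord n hn hnmin
end

section
/- In the binning algorithm, the union of all bins B_0 ∪ … ∪ B_K (i.e., {1,…,N}∖B_{K+1}) satisfies the Dörfler criterion: θ·∑_{j=1}^N x_j ≤ ∑_{j∉B_{K+1}} x_j. -/
/-!
Every index of `B_{K+1}` carries at most `(1 - θ) S / N`, where `S = ∑ x_j`, so the indices of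
`B_{K+1}` together carry at most `(1 - θ) S`; the remaining indices therefore carry at least `θ S`.
-/

open Finset

namespace Finset

variable {ι : Type*} {s t : Finset ι} {f : ι → ℝ}

theorem sum_le_card_mul_of_subset_of_forall_le {c : ℝ} (hts : t ⊆ s) (hc : 0 ≤ c)
    (hf : ∀ j ∈ t, f j ≤ c) : ∑ j ∈ t, f j ≤ #s * c :=
  calc ∑ j ∈ t, f j ≤ #t * c := by simpa using sum_le_card_nsmul t f c hf
    _ ≤ #s * c := by gcongr

theorem mul_sum_le_sum_sdiff_of_sum_le [DecidableEq ι] {θ : ℝ} (hts : t ⊆ s)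
    (ht : ∑ j ∈ t, f j ≤ (1 - θ) * ∑ j ∈ s, f j) :
    θ * ∑ j ∈ s, f j ≤ ∑ j ∈ s \ t, f j := by
  have hsplit := sum_sdiff (f := f) hts
  linarith

end Finset

theorem stmt_14_general (N : ℕ) (hN : 1 ≤ N) (θ ν : ℝ) (hθ0 : 0 < θ) (hθ1 : θ < 1)
    (x : ℕ → ℝ)
    (hx : ∀ j ∈ Finset.Icc 1 N, 0 ≤ x j)
    (Mmax : ℝ)
    (K : ℕ)
    (hK : ν ^ (K + 1) * Mmax
      ≤ (1 - θ) / θ * ((θ * ∑ j ∈ Finset.Icc 1 N, x j) / N)) :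
    θ * ∑ j ∈ Finset.Icc 1 N, x j
      ≤ ∑ j ∈ Finset.Icc 1 N \
          (Finset.Icc 1 N).filter (fun j => x j ≤ ν ^ (K + 1) * Mmax), x j := by
  set S := ∑ j ∈ Icc 1 N, x j
  have hN₀ : (N : ℝ) ≠ 0 := Nat.cast_ne_zero.mpr (by omega)
  have hthreshold : (1 - θ) / θ * (θ * S / N) = (1 - θ) * S / N := by field_simp
  have hc : 0 ≤ (1 - θ) * S / N := by
    have : 0 ≤ S := sum_nonneg hx
    have : 0 ≤ 1 - θ := by linarith
    positivity
  refine mul_sum_le_sum_sdiff_of_sum_le (filter_subset _ _) ?_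
  calc ∑ j ∈ (Icc 1 N).filter (fun j => x j ≤ ν ^ (K + 1) * Mmax), x j
      ≤ #(Icc 1 N) * ((1 - θ) * S / N) :=
        sum_le_card_mul_of_subset_of_forall_le (filter_subset _ _) hc fun j hj =>
          (mem_filter.mp hj).2.trans (hthreshold ▸ hK)
    _ = (1 - θ) * S := by rw [Nat.card_Icc, Nat.add_sub_cancel, mul_div_cancel₀ _ hN₀]

/-- In the binning algorithm, the union of all bins B_0 ∪ … ∪ B_K, i.e., the complement
of B_{K+1} = {j : x_j ≤ ν^{K+1}·M_max}, satisfies the Dörfler criterion. -/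
theorem stmt_14 (N : ℕ) (hN : 1 ≤ N) (θ ν : ℝ) (hθ0 : 0 < θ) (hθ1 : θ < 1)
    (hν0 : 0 < ν) (hν1 : ν < 1) (x : ℕ → ℝ)
    (hx : ∀ j ∈ Finset.Icc 1 N, 0 ≤ x j)
    (hx0 : ∃ j ∈ Finset.Icc 1 N, x j ≠ 0)
    (Mmax : ℝ) (hMb : ∀ j ∈ Finset.Icc 1 N, x j ≤ Mmax)
    (K : ℕ)
    (hK : ν ^ (K + 1) * Mmax
      ≤ (1 - θ) / θ * ((θ * ∑ j ∈ Finset.Icc 1 N, x j) / N)) :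
    θ * ∑ j ∈ Finset.Icc 1 N, x j
      ≤ ∑ j ∈ Finset.Icc 1 N \
          (Finset.Icc 1 N).filter (fun j => x j ≤ ν ^ (K + 1) * Mmax), x j :=
  stmt_14_general N hN θ ν hθ0 hθ1 x hx Mmax K hK
end

section
/- Counting bound within a bin: if all values x_j for j in a finite set R ∪ S lie in the half-open interval (ν^{k+1}·M_max, ν^k·M_max], and there is an element r₀ ∈ R with ∑_{j∈R∖{r₀}} x_j < ∑_{j∈S} x_j, then #R ≤ ⌈ν^{-1}·#S⌉. -/
theorem card_nsmul_lt_card_nsmul_of_sum_lt {ι α : Type*} [AddCommMonoid α] [PartialOrder α]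
    [IsOrderedAddMonoid α] {A B : Finset ι} {f : ι → α} {a b : α}
    (ha : ∀ i ∈ A, a ≤ f i) (hb : ∀ i ∈ B, f i ≤ b) (h : ∑ i ∈ A, f i < ∑ i ∈ B, f i) :
    A.card • a < B.card • b :=
  calc A.card • a ≤ ∑ i ∈ A, f i := A.card_nsmul_le_sum f a ha
    _ < ∑ i ∈ B, f i := h
    _ ≤ B.card • b := B.sum_le_card_nsmul f b hb

theorem stmt_15_general (ν Mmax : ℝ) (hν0 : 0 < ν) (hM : 0 < Mmax) (k : ℕ)
    (x : ℕ → ℝ) (R S : Finset ℕ)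
    (hbound : ∀ j ∈ R ∪ S, ν ^ (k + 1) * Mmax < x j ∧ x j ≤ ν ^ k * Mmax)
    (r₀ : ℕ) (hr : r₀ ∈ R)
    (hlt : ∑ j ∈ R.erase r₀, x j < ∑ j ∈ S, x j) :
    (R.card : ℤ) ≤ ⌈ν⁻¹ * (S.card : ℝ)⌉ := by
  have hsum := card_nsmul_lt_card_nsmul_of_sum_lt
    (fun j hj ↦ (hbound j (Finset.mem_union_left S (Finset.mem_of_mem_erase hj))).1.le)
    (fun j hj ↦ (hbound j (Finset.mem_union_right R hj)).2) hlt
  rw [nsmul_eq_mul, nsmul_eq_mul, Finset.cast_card_erase_of_mem hr, pow_succ] at hsum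
  have hbin : 0 < ν ^ k * Mmax := by positivity
  have hcard : ν * ((R.card : ℝ) - 1) < S.card := by
    refine lt_of_mul_lt_mul_right ?_ hbin.le
    linarith
  rw [Int.le_ceil_iff, lt_inv_mul_iff₀ hν0]
  exact_mod_cast hcard

/-- Counting bound within a bin: if all values x_j for j ∈ R ∪ S lie in
(ν^{k+1}·M_max, ν^k·M_max], and some r₀ ∈ R satisfies ∑_{R∖{r₀}} x_j < ∑_S x_j,
then #R ≤ ⌈ν⁻¹·#S⌉. -/
theorem stmt_15 (ν Mmax : ℝ) (hν0 : 0 < ν) (hν1 : ν < 1) (hM : 0 < Mmax) (k : ℕ)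
    (x : ℕ → ℝ) (R S : Finset ℕ)
    (hbound : ∀ j ∈ R ∪ S, ν ^ (k + 1) * Mmax < x j ∧ x j ≤ ν ^ k * Mmax)
    (r₀ : ℕ) (hr : r₀ ∈ R)
    (hlt : ∑ j ∈ R.erase r₀, x j < ∑ j ∈ S, x j) :
    (R.card : ℤ) ≤ ⌈ν⁻¹ * (S.card : ℝ)⌉ :=
  stmt_15_general ν Mmax hν0 hM k x R S hbound r₀ hr hlt
end

section
/- The QuickMark recursion preserves admissibility: given admissible inputs (π_old, ℓ, u, v) and the partitioned permutation π_new with indices g, s and pivot value p*, if σ_g := ∑_{j=ℓ}^g x_{π_new(j)} ≥ v, then (π_new, ℓ, g, v) is admissible; if instead σ_g + (s−g−1)·p* < v, then (π_new, s, u, v − ∑_{j=ℓ}^{s−1} x_{π_new(j)}) is admissible. -/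
/-! Condition (a) says that positions ℓ and u + 1 are cuts: every value before a cut exceeds
every value from it on. Rearranging the block {ℓ, …, u} preserves both cuts and both sums in (b),
so π_new is admissible for the old call. The new cut (at g + 1, resp. s) holds because the pivot
value separates its two sides; the values beyond u lie below p* = x (π_old p) by the old cut at
u + 1. The goal values follow by splitting the block sum at g + 1 and s. -/

/-- Admissibility of a QuickMark call (x, π, ℓ, u, v): partial ordering of x∘π outside
{ℓ,…,u} and the goal-value identity 0 < v = θ·∑ x_j − ∑_{j<ℓ} x_{π(j)} ≤ ∑_{j=ℓ}^u x_{π(j)}. -/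
def QuickMarkAdmissible (N : ℕ) (θ : ℝ) (x : ℕ → ℝ) (π : Equiv.Perm ℕ)
    (ℓ u : ℕ) (v : ℝ) : Prop :=
  (∀ j k : ℕ, 1 ≤ j → j < ℓ → ℓ ≤ k → k ≤ N → x (π k) < x (π j)) ∧
  (∀ j k : ℕ, 1 ≤ j → j ≤ u → u < k → k ≤ N → x (π k) < x (π j)) ∧
  0 < v ∧
  v = θ * ∑ j ∈ Finset.Icc 1 N, x j - ∑ j ∈ Finset.Icc 1 (ℓ - 1), x (π j) ∧
  v ≤ ∑ j ∈ Finset.Icc ℓ u, x (π j)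

open Finset

def SeparatesAt (N : ℕ) (x : ℕ → ℝ) (π : Equiv.Perm ℕ) (m : ℕ) : Prop :=
  ∀ j k : ℕ, 1 ≤ j → j < m → m ≤ k → k ≤ N → x (π k) < x (π j)

theorem quickMarkAdmissible_iff {N : ℕ} {θ : ℝ} {x : ℕ → ℝ} {π : Equiv.Perm ℕ} {ℓ u : ℕ}
    {v : ℝ} :
    QuickMarkAdmissible N θ x π ℓ u v ↔
      SeparatesAt N x π ℓ ∧ SeparatesAt N x π (u + 1) ∧ 0 < v ∧
        v = θ * ∑ j ∈ Icc 1 N, x j - ∑ j ∈ Icc 1 (ℓ - 1), x (π j) ∧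
        v ≤ ∑ j ∈ Icc ℓ u, x (π j) := by
  simp only [QuickMarkAdmissible, SeparatesAt, Nat.lt_add_one_iff, Nat.add_one_le_iff]

theorem Finset.exists_mem_apply_eq_of_image_eq {α β : Type*} [DecidableEq β] {s : Finset α}
    {f g : α → β} (h : s.image f = s.image g) {a : α} (ha : a ∈ s) :
    ∃ b ∈ s, f a = g b := by
  obtain ⟨b, hb, hba⟩ := mem_image.mp (h ▸ mem_image_of_mem f ha)
  exact ⟨b, hb, hba.symm⟩

theorem Finset.sum_comp_eq_of_image_eq {α β M : Type*} [DecidableEq β] [AddCommMonoid M]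
    {s : Finset α} {f g : α → β} (hf : Set.InjOn f s) (hg : Set.InjOn g s)
    (h : s.image f = s.image g) (φ : β → M) :
    ∑ a ∈ s, φ (f a) = ∑ a ∈ s, φ (g a) := by
  rw [← sum_image hf, ← sum_image hg, h]

theorem Finset.sum_Icc_sub_one_add_sum_Icc {M : Type*} [AddCommMonoid M] (f : ℕ → M)
    {a b c : ℕ} (hb : b ≠ 0) (hab : a ≤ b) (hbc : b ≤ c + 1) :
    ∑ i ∈ Icc a (b - 1), f i + ∑ i ∈ Icc b c, f i = ∑ i ∈ Icc a c, f i := by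
  rw [Icc_sub_one_right_eq_Ico_of_not_isMin (by simpa using hb), ← Ico_add_one_right_eq_Icc,
    ← Ico_add_one_right_eq_Icc, sum_Ico_consecutive f hab hbc]

section

variable {N : ℕ} {x : ℕ → ℝ}

theorem SeparatesAt.of_block {π : Equiv.Perm ℕ} {ℓ m : ℕ} (h : SeparatesAt N x π ℓ)
    (hℓm : ℓ ≤ m)
    (hblock : ∀ j k, ℓ ≤ j → j < m → m ≤ k → k ≤ N → x (π k) < x (π j)) :
    SeparatesAt N x π m := by
  intro j k hj hjm hmk hkN
  rcases lt_or_ge j ℓ with hjℓ | hℓj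
  · exact h j k hj hjℓ (hℓm.trans hmk) hkN
  · exact hblock j k hℓj hjm hmk hkN

theorem exists_apply_eq_of_permutes_Icc {πo πn : Equiv.Perm ℕ} {ℓ u : ℕ}
    (hagree : ∀ j, j ∉ Icc ℓ u → πn j = πo j)
    (himg : (Icc ℓ u).image ⇑πn = (Icc ℓ u).image ⇑πo) (i : ℕ) :
    ∃ i', πn i = πo i' ∧ (i' = i ∨ i ∈ Icc ℓ u ∧ i' ∈ Icc ℓ u) := by
  by_cases hi : i ∈ Icc ℓ u
  · obtain ⟨i', hi', he⟩ := exists_mem_apply_eq_of_image_eq himg hi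
    exact ⟨i', he, Or.inr ⟨hi, hi'⟩⟩
  · exact ⟨i, hagree i hi, Or.inl rfl⟩

/-- A cut outside the open block `(ℓ, u]` has the whole block on one side, so rearranging the
block cannot break it. -/
theorem SeparatesAt.of_permutes_Icc {πo πn : Equiv.Perm ℕ} {ℓ u m : ℕ} (hℓ : 1 ≤ ℓ)
    (huN : u ≤ N) (hagree : ∀ j, j ∉ Icc ℓ u → πn j = πo j)
    (himg : (Icc ℓ u).image ⇑πn = (Icc ℓ u).image ⇑πo) (hm : m ≤ ℓ ∨ u < m)
    (h : SeparatesAt N x πo m) : SeparatesAt N x πn m := by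
  intro j k hj hjm hmk hkN
  obtain ⟨j', hj, hj'⟩ := exists_apply_eq_of_permutes_Icc hagree himg j
  obtain ⟨k', hk, hk'⟩ := exists_apply_eq_of_permutes_Icc hagree himg k
  rw [hj, hk]
  simp only [mem_Icc] at hj' hk'
  exact h j' k' (by omega) (by omega) (by omega) (by omega)

theorem QuickMarkAdmissible.of_permutes_Icc {θ : ℝ} {πo πn : Equiv.Perm ℕ} {ℓ u : ℕ} {v : ℝ}
    (hℓ : 1 ≤ ℓ) (huN : u ≤ N) (hagree : ∀ j, j ∉ Icc ℓ u → πn j = πo j)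
    (himg : (Icc ℓ u).image ⇑πn = (Icc ℓ u).image ⇑πo)
    (hadm : QuickMarkAdmissible N θ x πo ℓ u v) : QuickMarkAdmissible N θ x πn ℓ u v := by
  obtain ⟨hcutℓ, hcutu, hv, hvdef, hvle⟩ := quickMarkAdmissible_iff.mp hadm
  have hprefix : ∑ j ∈ Icc 1 (ℓ - 1), x (πn j) = ∑ j ∈ Icc 1 (ℓ - 1), x (πo j) :=
    sum_congr rfl fun j hj => by
      rw [hagree j (by simp only [mem_Icc] at hj ⊢; omega)]
  have hblock : ∑ j ∈ Icc ℓ u, x (πn j) = ∑ j ∈ Icc ℓ u, x (πo j) :=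
    sum_comp_eq_of_image_eq πn.injective.injOn πo.injective.injOn himg x
  refine quickMarkAdmissible_iff.mpr ⟨?_, ?_, hv, hprefix ▸ hvdef, hblock ▸ hvle⟩
  · exact hcutℓ.of_permutes_Icc hℓ huN hagree himg (Or.inl le_rfl)
  · exact hcutu.of_permutes_Icc hℓ huN hagree himg (Or.inr u.lt_add_one)

theorem QuickMarkAdmissible.restrict_upper {θ : ℝ} {π : Equiv.Perm ℕ} {ℓ u g : ℕ} {v c : ℝ}
    (hadm : QuickMarkAdmissible N θ x π ℓ u v) (hg : ℓ ≤ g + 1)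
    (hhead : ∀ j, ℓ ≤ j → j ≤ g → c < x (π j)) (htail : ∀ k, g < k → k ≤ N → x (π k) ≤ c)
    (hv : v ≤ ∑ j ∈ Icc ℓ g, x (π j)) : QuickMarkAdmissible N θ x π ℓ g v := by
  obtain ⟨hcutℓ, -, hv0, hvdef, -⟩ := quickMarkAdmissible_iff.mp hadm
  refine quickMarkAdmissible_iff.mpr ⟨hcutℓ, hcutℓ.of_block hg ?_, hv0, hvdef, hv⟩
  intro j k hℓj hjg hgk hkN
  exact (htail k hgk hkN).trans_lt (hhead j hℓj (Nat.lt_add_one_iff.mp hjg))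

theorem QuickMarkAdmissible.restrict_lower {θ : ℝ} {π : Equiv.Perm ℕ} {ℓ u s : ℕ} {v c : ℝ}
    (hadm : QuickMarkAdmissible N θ x π ℓ u v) (hℓ : 1 ≤ ℓ) (hℓs : ℓ ≤ s) (hsu : s ≤ u + 1)
    (hhead : ∀ j, ℓ ≤ j → j < s → c ≤ x (π j)) (htail : ∀ k, s ≤ k → k ≤ N → x (π k) < c)
    (hv : ∑ j ∈ Icc ℓ (s - 1), x (π j) < v) :
    QuickMarkAdmissible N θ x π s u (v - ∑ j ∈ Icc ℓ (s - 1), x (π j)) := by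
  obtain ⟨hcutℓ, hcutu, -, hvdef, hvle⟩ := quickMarkAdmissible_iff.mp hadm
  have hprefix := sum_Icc_sub_one_add_sum_Icc (fun j => x (π j)) (b := ℓ) (c := s - 1)
    (by omega) hℓ (by omega)
  have hblock := sum_Icc_sub_one_add_sum_Icc (fun j => x (π j)) (by omega) hℓs hsu
  refine quickMarkAdmissible_iff.mpr ⟨hcutℓ.of_block hℓs ?_, hcutu, by linarith, ?_, ?_⟩
  · intro j k hℓj hjs hsk hkN
    exact (htail k hsk hkN).trans_le (hhead j hℓj hjs)
  · rw [← hprefix]; linarith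
  · linarith

theorem sum_Icc_eq_add_mul_of_eq_const {f : ℕ → ℝ} {ℓ g s : ℕ} {c : ℝ} (hg : ℓ ≤ g + 1)
    (hgs : g < s) (hconst : ∀ j, g < j → j < s → f j = c) :
    ∑ j ∈ Icc ℓ (s - 1), f j = ∑ j ∈ Icc ℓ g, f j + ((s - g - 1 : ℕ) : ℝ) * c := by
  have hsplit := sum_Icc_sub_one_add_sum_Icc f (b := g + 1) (c := s - 1) (by omega) hg (by omega)
  have hmid : ∑ j ∈ Icc (g + 1) (s - 1), f j = ((s - g - 1 : ℕ) : ℝ) * c := by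
    rw [sum_congr rfl fun j hj => hconst j (mem_Icc.mp hj).1 (by have := (mem_Icc.mp hj).2; omega),
      sum_const, Nat.card_Icc, nsmul_eq_mul]
    congr 2
    omega
  rw [← hsplit, hmid, Nat.add_sub_cancel]

end

theorem stmt_16_general (N : ℕ) (θ : ℝ) (x : ℕ → ℝ)
    (πo πn : Equiv.Perm ℕ) (ℓ u g s p : ℕ) (v : ℝ) (pstar : ℝ)
    (hl : 1 ≤ ℓ) (huN : u ≤ N)
    (hadm : QuickMarkAdmissible N θ x πo ℓ u v)
    (hagree : ∀ j, j ∉ Finset.Icc ℓ u → πn j = πo j)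
    (himg : (Finset.Icc ℓ u).image ⇑πn = (Finset.Icc ℓ u).image ⇑πo)
    (hg1 : ℓ ≤ g + 1) (hgs : g < s) (hs1 : s ≤ u + 1)
    (hp : p ∈ Finset.Icc ℓ u) (hpdef : pstar = x (πo p))
    (hpart1 : ∀ j, ℓ ≤ j → j ≤ g → pstar < x (πn j))
    (hpart2 : ∀ j, g < j → j < s → x (πn j) = pstar)
    (hpart3 : ∀ j, s ≤ j → j ≤ u → x (πn j) < pstar) :
    ((v ≤ ∑ j ∈ Finset.Icc ℓ g, x (πn j)) →
      QuickMarkAdmissible N θ x πn ℓ g v) ∧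
    ((∑ j ∈ Finset.Icc ℓ g, x (πn j) + ((s - g - 1 : ℕ) : ℝ) * pstar < v) →
      QuickMarkAdmissible N θ x πn s u
        (v - ∑ j ∈ Finset.Icc ℓ (s - 1), x (πn j))) := by
  obtain ⟨hpℓ, hpu⟩ := mem_Icc.mp hp
  have hadmn := hadm.of_permutes_Icc hl huN hagree himg
  have hbelow : ∀ k, u < k → k ≤ N → x (πn k) < pstar := by
    intro k huk hkN
    rw [hagree k (by simp only [mem_Icc]; omega), hpdef]
    exact (quickMarkAdmissible_iff.mp hadm).2.1 p k (by omega) (by omega) (by omega) hkN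
  refine ⟨hadmn.restrict_upper hg1 hpart1 ?_, fun hv => ?_⟩
  · intro k hgk hkN
    rcases lt_or_ge u k with huk | hku
    · exact (hbelow k huk hkN).le
    rcases lt_or_ge k s with hks | hsk
    · exact (hpart2 k hgk hks).le
    · exact (hpart3 k hsk hku).le
  · refine hadmn.restrict_lower hl (by omega) hs1 (c := pstar) ?_ ?_ ?_
    · intro j hℓj hjs
      rcases le_or_gt j g with hjg | hgj
      · exact (hpart1 j hℓj hjg).le
      · exact (hpart2 j hgj hjs).ge
    · intro k hsk hkN
      rcases lt_or_ge u k with huk | hku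
      · exact hbelow k huk hkN
      · exact hpart3 k hsk hku
    · rwa [sum_Icc_eq_add_mul_of_eq_const hg1 hgs hpart2]

/-- The QuickMark recursion preserves admissibility: if (π_old, ℓ, u, v) is admissible and
π_new is the partitioned permutation with indices g, s and pivot value p*, then
σ_g ≥ v implies (π_new, ℓ, g, v) admissible, and σ_g + (s−g−1)·p* < v implies
(π_new, s, u, v − ∑_{j=ℓ}^{s−1} x_{π_new(j)}) admissible. -/
theorem stmt_16 (N : ℕ) (θ : ℝ) (hθ0 : 0 < θ) (hθ1 : θ < 1) (x : ℕ → ℝ)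
    (hx : ∀ j, 0 ≤ x j)
    (πo πn : Equiv.Perm ℕ) (ℓ u g s p : ℕ) (v : ℝ) (pstar : ℝ)
    (hl : 1 ≤ ℓ) (hlu : ℓ ≤ u) (huN : u ≤ N)
    (hadm : QuickMarkAdmissible N θ x πo ℓ u v)
    (hagree : ∀ j, j ∉ Finset.Icc ℓ u → πn j = πo j)
    (himg : (Finset.Icc ℓ u).image ⇑πn = (Finset.Icc ℓ u).image ⇑πo)
    (hg1 : ℓ ≤ g + 1) (hgs : g < s) (hs1 : s ≤ u + 1)
    (hp : p ∈ Finset.Icc ℓ u) (hpdef : pstar = x (πo p)) (hp0 : 0 < pstar)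
    (hpart1 : ∀ j, ℓ ≤ j → j ≤ g → pstar < x (πn j))
    (hpart2 : ∀ j, g < j → j < s → x (πn j) = pstar)
    (hpart3 : ∀ j, s ≤ j → j ≤ u → x (πn j) < pstar) :
    ((v ≤ ∑ j ∈ Finset.Icc ℓ g, x (πn j)) →
      QuickMarkAdmissible N θ x πn ℓ g v) ∧
    ((∑ j ∈ Finset.Icc ℓ g, x (πn j) + ((s - g - 1 : ℕ) : ℝ) * pstar < v) →
      QuickMarkAdmissible N θ x πn s u
        (v - ∑ j ∈ Finset.Icc ℓ (s - 1), x (πn j))) :=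
  stmt_16_general N θ x πo πn ℓ u g s p v pstar hl huN hadm hagree himg hg1 hgs hs1 hp hpdef hpart1
    hpart2 hpart3
end

section
/- Counterexample family for subtractive-threshold marking: for any 0 < θ < 1, 0 < ν < 1, and C ∈ ℕ, define δ := ⌈(1 − ν(⌈1/ν⌉−1))^{-1}⌉^{-1}, R := ⌈(2−θ)/θ⌉/δ + 1, N := (C+1)R, ε := (CR)^{-1}·min{1, (1−θ)(1+⌈(2−θ)/θ⌉)/θ}, and x = (1, ε,…,ε (CR times), δ,…,δ (R−1 times)). Then the set M' := {1} ∪ {N−R+2,…,N} satisfies the Dörfler criterion θ·∑_j x_j ≤ ∑_{j∈M'} x_j, so N_min ≤ R. -/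
/-!
With `K = ⌈(2 - θ)/θ⌉`, the `R - 1` entries equal to `δ` add up to `(R - 1) δ = K`, so the total
is `1 + C R ε + K` while the marked set `M'` carries `1 + K`. The factor `min 1 …` in `ε` caps
`θ C R ε` by `(1 - θ)(1 + K)`, which is exactly the Dörfler criterion `θ (1 + C R ε + K) ≤ 1 + K`.
Then `M'`, of cardinality `R`, bounds the infimum.
-/

open Finset

theorem mul_ceil_one_div_sub_one_lt_one {α : Type*} [Field α] [LinearOrder α]
    [IsStrictOrderedRing α] [FloorRing α] {ν : α} (hν : 0 < ν) : ν * ((⌈1 / ν⌉ : α) - 1) < 1 := by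
  calc ν * ((⌈1 / ν⌉ : α) - 1) < ν * (1 / ν) :=
        mul_lt_mul_of_pos_left (by linarith [Int.ceil_lt_add_one (1 / ν)]) hν
    _ = 1 := mul_one_div_cancel hν.ne'

theorem mul_inv_mul_le {α : Type*} [Field α] [LinearOrder α] [IsStrictOrderedRing α]
    (a : α) {b : α} (hb : 0 ≤ b) : a * (a⁻¹ * b) ≤ b := by
  rcases eq_or_ne a 0 with rfl | ha
  · simpa using hb
  · rw [mul_inv_cancel_left₀ ha]

theorem sInf_card_le_of_subset {ι α : Type*} [AddCommMonoid α] [Mul α] [LE α]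
    {S M : Finset ι} {x : ι → α} {θ : α} (hM : M ⊆ S) (h : θ * ∑ j ∈ S, x j ≤ ∑ j ∈ M, x j) :
    sInf {m : ℕ | ∃ M ⊆ S, (θ * ∑ j ∈ S, x j ≤ ∑ j ∈ M, x j) ∧ M.card = m} ≤ M.card :=
  Nat.sInf_le ⟨M, hM, h, rfl⟩

section Blocks

variable {M : Type*} [AddCommMonoid M] {x : ℕ → M} {n k : ℕ}

theorem sum_Icc_eq_nsmul {a b : ℕ} {c : M} (h : ∀ j, a ≤ j → j ≤ b → x j = c) :
    ∑ j ∈ Icc a b, x j = (b + 1 - a) • c := by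
  rw [sum_congr rfl fun j hj => h j (mem_Icc.1 hj).1 (mem_Icc.1 hj).2, sum_const, Nat.card_Icc]

theorem one_notMem_Icc_add_two : 1 ∉ Icc (n + 2) (n + 1 + k) := by
  simp

theorem card_insert_one_Icc_add_two : #(insert 1 (Icc (n + 2) (n + 1 + k))) = k + 1 := by
  rw [card_insert_of_notMem one_notMem_Icc_add_two, Nat.card_Icc]
  omega

theorem sum_insert_one_Icc_add_two {δ : M} (hδ : ∀ j, n + 2 ≤ j → j ≤ n + 1 + k → x j = δ) :
    ∑ j ∈ insert 1 (Icc (n + 2) (n + 1 + k)), x j = x 1 + k • δ := by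
  rw [sum_insert one_notMem_Icc_add_two, sum_Icc_eq_nsmul hδ]
  congr 2
  omega

theorem sum_Icc_one_eq_add_nsmul_add_nsmul {ε δ : M} (hε : ∀ j, 2 ≤ j → j ≤ n + 1 → x j = ε)
    (hδ : ∀ j, n + 2 ≤ j → j ≤ n + 1 + k → x j = δ) :
    ∑ j ∈ Icc 1 (n + 1 + k), x j = x 1 + n • ε + k • δ := by
  have hblock := sum_Ioc_consecutive x (Nat.zero_le (n + 1)) (Nat.le_add_right (n + 1) k)
  rw [← sum_Ioc_consecutive x (Nat.zero_le 1) (Nat.le_add_left 1 n)] at hblock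
  simp only [← Icc_add_one_left_eq_Ioc, zero_add, Icc_self, sum_singleton] at hblock
  rw [← hblock, sum_Icc_eq_nsmul (a := 1 + 1) hε, sum_Icc_eq_nsmul (a := n + 1 + 1) hδ]
  congr 3; omega

end Blocks

theorem stmt_18_general (θ ν : ℝ) (hθ0 : 0 < θ) (hθ1 : θ < 1) (hν0 : 0 < ν)
    (C R N : ℕ) (δ ε : ℝ)
    (hδ : δ = ((⌈(1 - ν * ((⌈(1 : ℝ) / ν⌉ : ℝ) - 1))⁻¹⌉ : ℝ))⁻¹)
    (hR : (R : ℝ) = ((⌈(2 - θ) / θ⌉ : ℝ)) / δ + 1)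
    (hN : N = (C + 1) * R)
    (hε : ε = ((C * R : ℕ) : ℝ)⁻¹
      * min 1 ((1 - θ) * (1 + ((⌈(2 - θ) / θ⌉ : ℝ))) / θ))
    (x : ℕ → ℝ) (hx1 : x 1 = 1)
    (hxε : ∀ j, 2 ≤ j → j ≤ C * R + 1 → x j = ε)
    (hxδ : ∀ j, C * R + 2 ≤ j → j ≤ N → x j = δ) :
    (θ * ∑ j ∈ Finset.Icc 1 N, x j
      ≤ ∑ j ∈ insert 1 (Finset.Icc (N - R + 2) N), x j) ∧
    sInf {m : ℕ | ∃ M ⊆ Finset.Icc 1 N,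
      (θ * ∑ j ∈ Finset.Icc 1 N, x j ≤ ∑ j ∈ M, x j) ∧ M.card = m} ≤ R := by
  set K : ℝ := (⌈(2 - θ) / θ⌉ : ℝ)
  have hK : 0 ≤ K := Int.cast_nonneg_iff.mpr (Int.ceil_nonneg (div_pos (by linarith) hθ0).le)
  have hδ0 : 0 < δ := hδ ▸ inv_pos.2 (Int.cast_pos.2 (Int.ceil_pos.2
    (inv_pos.2 (sub_pos.2 (mul_ceil_one_div_sub_one_lt_one hν0)))))
  obtain ⟨k, rfl⟩ : ∃ k, R = k + 1 := Nat.exists_eq_add_one.2 <| by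
    exact_mod_cast (show (0 : ℝ) < R by rw [hR]; positivity)
  have hkδ : (k : ℝ) * δ = K := (eq_div_iff hδ0.ne').1 (by push_cast at hR; linarith)
  obtain rfl : N = C * (k + 1) + 1 + k := by rw [hN]; ring
  rw [show C * (k + 1) + 1 + k - (k + 1) + 2 = C * (k + 1) + 2 by omega]
  have hmarked := sum_insert_one_Icc_add_two hxδ
  have htotal := sum_Icc_one_eq_add_nsmul_add_nsmul hxε hxδ
  rw [nsmul_eq_mul, hkδ, hx1] at hmarked
  rw [nsmul_eq_mul, nsmul_eq_mul, hkδ, hx1] at htotal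
  have hεθ : θ * (((C * (k + 1) : ℕ) : ℝ) * ε) ≤ (1 - θ) * (1 + K) := by
    rw [← le_div_iff₀' hθ0, hε]
    have hbound : 0 ≤ (1 - θ) * (1 + K) / θ :=
      div_nonneg (mul_nonneg (by linarith) (by linarith)) hθ0.le
    exact (mul_inv_mul_le _ (le_min zero_le_one hbound)).trans (min_le_right _ _)
  have hdorfler : θ * ∑ j ∈ Icc 1 (C * (k + 1) + 1 + k), x j
      ≤ ∑ j ∈ insert 1 (Icc (C * (k + 1) + 2) (C * (k + 1) + 1 + k)), x j := by
    rw [htotal, hmarked]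
    linear_combination hεθ
  have hsubset : insert 1 (Icc (C * (k + 1) + 2) (C * (k + 1) + 1 + k))
      ⊆ Icc 1 (C * (k + 1) + 1 + k) :=
    insert_subset (mem_Icc.2 ⟨le_rfl, by omega⟩) (Icc_subset_Icc (by omega) le_rfl)
  exact ⟨hdorfler,
    (sInf_card_le_of_subset hsubset hdorfler).trans card_insert_one_Icc_add_two.le⟩

/-- Counterexample family for subtractive-threshold marking: with
δ := ⌈(1 − ν(⌈1/ν⌉−1))⁻¹⌉⁻¹, R := ⌈(2−θ)/θ⌉/δ + 1 (a natural number by construction),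
N := (C+1)·R, ε := (CR)⁻¹·min{1, (1−θ)(1+⌈(2−θ)/θ⌉)/θ}, and
x = (1, ε,…,ε (CR times), δ,…,δ (R−1 times)), the set M' := {1} ∪ {N−R+2,…,N}
satisfies the Dörfler criterion, so N_min ≤ R. -/
theorem stmt_18 (θ ν : ℝ) (hθ0 : 0 < θ) (hθ1 : θ < 1) (hν0 : 0 < ν) (hν1 : ν < 1)
    (C R N : ℕ) (hC : 1 ≤ C) (δ ε : ℝ)
    (hδ : δ = ((⌈(1 - ν * ((⌈(1 : ℝ) / ν⌉ : ℝ) - 1))⁻¹⌉ : ℝ))⁻¹)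
    (hR : (R : ℝ) = ((⌈(2 - θ) / θ⌉ : ℝ)) / δ + 1)
    (hN : N = (C + 1) * R)
    (hε : ε = ((C * R : ℕ) : ℝ)⁻¹
      * min 1 ((1 - θ) * (1 + ((⌈(2 - θ) / θ⌉ : ℝ))) / θ))
    (x : ℕ → ℝ) (hx1 : x 1 = 1)
    (hxε : ∀ j, 2 ≤ j → j ≤ C * R + 1 → x j = ε)
    (hxδ : ∀ j, C * R + 2 ≤ j → j ≤ N → x j = δ) :
    (θ * ∑ j ∈ Finset.Icc 1 N, x j
      ≤ ∑ j ∈ insert 1 (Finset.Icc (N - R + 2) N), x j) ∧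
    sInf {m : ℕ | ∃ M ⊆ Finset.Icc 1 N,
      (θ * ∑ j ∈ Finset.Icc 1 N, x j ≤ ∑ j ∈ M, x j) ∧ M.card = m} ≤ R :=
  stmt_18_general θ ν hθ0 hθ1 hν0 C R N δ ε hδ hR hN hε x hx1 hxε hxδ
end

section
/- In the same counterexample family, it holds that θ·∑_{j=1}^N x_j > ∑_{j=1}^{CR+1} x_j = 1 + CR·ε; consequently the set {1,…,CR+1} does not satisfy the Dörfler criterion and any marking strategy that takes indices in the order 1, 2, 3,… must select more than CR + 1 > C·N_min indices. -/
/-!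
With K = ⌈(2 - θ)/θ⌉, the δ-tail has R - 1 = K/δ entries and sums to K, while the ε-block sums
to at most min{1, (1 - θ)(1 + K)/θ}. The first CR + 1 entries thus carry at most 2, which is
less than θ(1 + K) ≤ θ · total since θK ≥ 2 - θ. On the other hand the entry 1 together with
the tail, R indices in all, carries 1 + K ≥ θ · total, so the minimal Dörfler set has at most
R elements.
-/

open Finset

lemma one_sub_mul_ceil_one_div_sub_one_pos {α : Type*} [Field α] [LinearOrder α]
    [IsStrictOrderedRing α] [FloorRing α] {ν : α} (hν : 0 < ν) :
    0 < 1 - ν * ((⌈1 / ν⌉ : α) - 1) := by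
  have hceil := Int.ceil_lt_add_one (1 / ν)
  have hν_inv : ν * (1 / ν) = 1 := mul_one_div_cancel hν.ne'
  nlinarith

lemma inv_ceil_inv_pos {α : Type*} [Field α] [LinearOrder α] [IsStrictOrderedRing α]
    [FloorRing α] {t : α} (ht : 0 < t) : 0 < ((⌈t⁻¹⌉ : α))⁻¹ :=
  inv_pos.2 (Int.cast_pos.2 (Int.ceil_pos.2 (inv_pos.2 ht)))

lemma natCast_mul_inv_mul_le {α : Type*} [Field α] [LinearOrder α] [IsStrictOrderedRing α]
    (n : ℕ) {a : α} (ha : 0 ≤ a) : (n : α) * ((n : α)⁻¹ * a) ≤ a := by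
  rw [← mul_assoc]
  exact mul_le_of_le_one_left ha mul_inv_le_one

lemma one_add_lt_mul_one_add_add {θ s K : ℝ} (hθ0 : 0 < θ) (hθ1 : θ < 1) (hs : s ≤ 1)
    (hK : 2 - θ ≤ θ * K) : 1 + s < θ * (1 + s + K) := by
  nlinarith [mul_le_mul_of_nonneg_left hs (sub_nonneg.2 hθ1.le)]

lemma sum_Icc_one_eq_add_sum_Icc {M : Type*} [AddCommMonoid M] (f : ℕ → M) {m k : ℕ}
    (hmk : m ≤ k) :
    ∑ j ∈ Icc 1 k, f j = ∑ j ∈ Icc 1 m, f j + ∑ j ∈ Icc (m + 1) k, f j := by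
  have h := sum_Ioc_consecutive f (Nat.zero_le m) hmk
  rwa [← Icc_add_one_left_eq_Ioc, ← Icc_add_one_left_eq_Ioc, ← Icc_add_one_left_eq_Ioc,
    zero_add, eq_comm] at h

lemma sum_Icc_eq_mul_of_forall {f : ℕ → ℝ} {a b : ℕ} {c : ℝ}
    (hf : ∀ j, a ≤ j → j ≤ b → f j = c) :
    ∑ j ∈ Icc a b, f j = ((b + 1 - a : ℕ) : ℝ) * c := by
  rw [sum_congr rfl fun j hj => hf j (mem_Icc.1 hj).1 (mem_Icc.1 hj).2, sum_const, Nat.card_Icc,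
    nsmul_eq_mul]

section Profile

variable {x : ℕ → ℝ} {n R : ℕ} {ε δ : ℝ}

lemma sum_Icc_one_head (hx1 : x 1 = 1) (hxε : ∀ j, 2 ≤ j → j ≤ n + 1 → x j = ε) :
    ∑ j ∈ Icc 1 (n + 1), x j = 1 + n * ε := by
  rw [sum_Icc_one_eq_add_sum_Icc x (Nat.le_add_left 1 n), Icc_self, sum_singleton, hx1,
    sum_Icc_eq_mul_of_forall hxε, show n + 1 + 1 - 2 = n by omega]

lemma sum_Icc_one_eq_head_add_tail (hR : 1 ≤ R) :
    ∑ j ∈ Icc 1 (n + R), x j = ∑ j ∈ Icc 1 (n + 1), x j + ∑ j ∈ Icc (n + 2) (n + R), x j :=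
  sum_Icc_one_eq_add_sum_Icc x (by omega)

lemma sInf_dorfler_card_le {θ : ℝ} (hx1 : x 1 = 1) (hR : 1 ≤ R)
    (hθ : θ * ∑ j ∈ Icc 1 (n + R), x j ≤ 1 + ∑ j ∈ Icc (n + 2) (n + R), x j) :
    sInf {m : ℕ | ∃ M ⊆ Icc 1 (n + R),
      (θ * ∑ j ∈ Icc 1 (n + R), x j ≤ ∑ j ∈ M, x j) ∧ M.card = m} ≤ R := by
  have h1 : 1 ∉ Icc (n + 2) (n + R) := by simp
  refine Nat.sInf_le ⟨insert 1 (Icc (n + 2) (n + R)), ?_, ?_, ?_⟩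
  · exact insert_subset (by simp; omega) (Icc_subset_Icc_left (by omega))
  · rwa [sum_insert h1, hx1]
  · rw [card_insert_of_notMem h1, Nat.card_Icc]
    omega

end Profile

theorem stmt_19_general (θ ν : ℝ) (hθ0 : 0 < θ) (hθ1 : θ < 1) (hν0 : 0 < ν)
    (C R N : ℕ) (δ ε : ℝ)
    (hδ : δ = ((⌈(1 - ν * ((⌈(1 : ℝ) / ν⌉ : ℝ) - 1))⁻¹⌉ : ℝ))⁻¹)
    (hR : (R : ℝ) = ((⌈(2 - θ) / θ⌉ : ℝ)) / δ + 1)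
    (hN : N = (C + 1) * R)
    (hε : ε = ((C * R : ℕ) : ℝ)⁻¹
      * min 1 ((1 - θ) * (1 + ((⌈(2 - θ) / θ⌉ : ℝ))) / θ))
    (x : ℕ → ℝ) (hx1 : x 1 = 1)
    (hxε : ∀ j, 2 ≤ j → j ≤ C * R + 1 → x j = ε)
    (hxδ : ∀ j, C * R + 2 ≤ j → j ≤ N → x j = δ) :
    (∑ j ∈ Finset.Icc 1 (C * R + 1), x j < θ * ∑ j ∈ Finset.Icc 1 N, x j) ∧
    (∑ j ∈ Finset.Icc 1 (C * R + 1), x j = 1 + (C * R : ℕ) * ε) ∧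
    (C * sInf {m : ℕ | ∃ M ⊆ Finset.Icc 1 N,
      (θ * ∑ j ∈ Finset.Icc 1 N, x j ≤ ∑ j ∈ M, x j) ∧ M.card = m}
      < C * R + 1) := by
  obtain rfl : N = C * R + R := by rw [hN, add_one_mul]
  set K : ℝ := (⌈(2 - θ) / θ⌉ : ℝ)
  have hθK : 2 - θ ≤ θ * K := by
    rw [mul_comm]; exact (div_le_iff₀ hθ0).1 (Int.le_ceil _)
  have hK0 : 0 ≤ K := by nlinarith
  have hδ0 : 0 < δ := hδ ▸ inv_ceil_inv_pos (one_sub_mul_ceil_one_div_sub_one_pos hν0)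
  have hR1 : 1 ≤ R := by
    have : (1 : ℝ) ≤ R := by rw [hR]; linarith [div_nonneg hK0 hδ0.le]
    exact_mod_cast this
  have htail : ∑ j ∈ Icc (C * R + 2) (C * R + R), x j = K := by
    rw [sum_Icc_eq_mul_of_forall hxδ, show C * R + R + 1 - (C * R + 2) = R - 1 by omega,
      Nat.cast_sub hR1, hR]
    field_simp
    ring
  set m := min 1 ((1 - θ) * (1 + K) / θ)
  have hεm : ((C * R : ℕ) : ℝ) * ε ≤ m :=
    hε ▸ natCast_mul_inv_mul_le _ (le_min zero_le_one (by positivity))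
  have hθm : θ * m ≤ (1 - θ) * (1 + K) := (le_div_iff₀' hθ0).1 (min_le_right _ _)
  have hhead := sum_Icc_one_head hx1 hxε
  have htotal := sum_Icc_one_eq_head_add_tail (x := x) (n := C * R) hR1
  rw [htail, hhead] at htotal
  refine ⟨?_, hhead, ?_⟩
  · rw [hhead, htotal]
    exact one_add_lt_mul_one_add_add hθ0 hθ1 (hεm.trans (min_le_left _ _)) hθK
  · have hdorfler := sInf_dorfler_card_le (θ := θ) hx1 hR1 (by
      rw [htotal, htail]; linarith [mul_le_mul_of_nonneg_left hεm hθ0.le])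
    exact Nat.lt_succ_of_le (Nat.mul_le_mul_left C hdorfler)

/-- In the same counterexample family, θ·∑ x_j > ∑_{j=1}^{CR+1} x_j = 1 + CR·ε;
consequently the set {1,…,CR+1} does not satisfy the Dörfler criterion, and any
strategy selecting indices in the order 1, 2, 3,… must take more than
CR + 1 > C·N_min indices. -/
theorem stmt_19 (θ ν : ℝ) (hθ0 : 0 < θ) (hθ1 : θ < 1) (hν0 : 0 < ν) (hν1 : ν < 1)
    (C R N : ℕ) (hC : 1 ≤ C) (δ ε : ℝ)
    (hδ : δ = ((⌈(1 - ν * ((⌈(1 : ℝ) / ν⌉ : ℝ) - 1))⁻¹⌉ : ℝ))⁻¹)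
    (hR : (R : ℝ) = ((⌈(2 - θ) / θ⌉ : ℝ)) / δ + 1)
    (hN : N = (C + 1) * R)
    (hε : ε = ((C * R : ℕ) : ℝ)⁻¹
      * min 1 ((1 - θ) * (1 + ((⌈(2 - θ) / θ⌉ : ℝ))) / θ))
    (x : ℕ → ℝ) (hx1 : x 1 = 1)
    (hxε : ∀ j, 2 ≤ j → j ≤ C * R + 1 → x j = ε)
    (hxδ : ∀ j, C * R + 2 ≤ j → j ≤ N → x j = δ) :
    (∑ j ∈ Finset.Icc 1 (C * R + 1), x j < θ * ∑ j ∈ Finset.Icc 1 N, x j) ∧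
    (∑ j ∈ Finset.Icc 1 (C * R + 1), x j = 1 + (C * R : ℕ) * ε) ∧
    (C * sInf {m : ℕ | ∃ M ⊆ Finset.Icc 1 N,
      (θ * ∑ j ∈ Finset.Icc 1 N, x j ≤ ∑ j ∈ M, x j) ∧ M.card = m}
      < C * R + 1) :=
  stmt_19_general θ ν hθ0 hθ1 hν0 C R N δ ε hδ hR hN hε x hx1 hxε hxδ
end
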